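/- arXiv:2111.11694 — 6 statements merged into one kernel-verified Lean document; each statement's English description precedes it below -/
import Mathlib

section
/- For all real numbers u and t with 0 < t < u, writing τ = log(u/t), one has ∫₀ᵗ (log(u/ε))^{1/2} dε ≤ (t/(2·τ^{1/2}))·(1 + 2τ). -/
/-!
Split the integrand by AM-GM with the constant `τ = log (u/t)`:
`√(log (u/ε)) ≤ (log (u/ε) + τ) / (2√τ)`.
The right-hand side integrates explicitly, since `∫₀ᵗ log (u/ε) dε = t (τ + 1)`.
-/

open Real Set MeasureTheory

lemma Real.sqrt_le_add_div_two_mul_sqrt {y c : ℝ} (hy : 0 ≤ y) (hc : 0 < c) :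
    √y ≤ (y + c) / (2 * √c) := by
  rw [le_div_iff₀ (by positivity)]
  nlinarith [sq_nonneg (√y - √c), sq_sqrt hy, sq_sqrt hc.le]

lemma eqOn_log_div_Ioo (u t : ℝ) (hu : u ≠ 0) :
    EqOn (fun ε ↦ log (u / ε)) (fun ε ↦ log u - log ε) (Ioo 0 t) :=
  fun _ hε ↦ log_div hu hε.1.ne'

lemma integrableOn_log_div_Ioo {u t : ℝ} (hu : u ≠ 0) (ht : 0 ≤ t) :
    IntegrableOn (fun ε ↦ log (u / ε)) (Ioo 0 t) := by
  refine IntegrableOn.congr_fun ?_ (eqOn_log_div_Ioo u t hu).symm measurableSet_Ioo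
  exact (intervalIntegrable_iff_integrableOn_Ioo_of_le ht).1
    (intervalIntegrable_const.sub intervalIntegral.intervalIntegrable_log')

lemma integral_log_div_Ioo {u t : ℝ} (hu : u ≠ 0) (ht : 0 < t) :
    ∫ ε in Ioo 0 t, log (u / ε) = t * (log (u / t) + 1) := by
  rw [setIntegral_congr_fun measurableSet_Ioo (eqOn_log_div_Ioo u t hu),
    ← integral_Ioc_eq_integral_Ioo, ← intervalIntegral.integral_of_le ht.le,
    intervalIntegral.integral_sub intervalIntegrable_const intervalIntegral.intervalIntegrable_log',
    integral_log, log_div hu ht.ne']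
  simp only [intervalIntegral.integral_const, sub_zero, smul_eq_mul, zero_mul, add_zero]
  ring

/-- For `0 < t < u`, with `τ = log (u/t)`,
`∫₀ᵗ √(log (u/ε)) dε ≤ (t / (2 √τ)) (1 + 2 τ)`. -/
theorem statement7 (u t : ℝ) (ht : 0 < t) (htu : t < u) :
    (∫ ε in Set.Ioo (0 : ℝ) t, Real.sqrt (Real.log (u / ε))) ≤
      t / (2 * Real.sqrt (Real.log (u / t))) * (1 + 2 * Real.log (u / t)) := by
  have hu : u ≠ 0 := (ht.trans htu).ne'
  have hτ : 0 < log (u / t) := log_pos ((one_lt_div ht).2 htu)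
  set τ := log (u / t)
  have hbound (ε : ℝ) (hε : ε ∈ Ioo 0 t) : √(log (u / ε)) ≤ (log (u / ε) + τ) / (2 * √τ) :=
    sqrt_le_add_div_two_mul_sqrt (log_nonneg ((one_le_div hε.1).2 (hε.2.trans htu).le)) hτ
  have hint : IntegrableOn (fun ε ↦ log (u / ε)) (Ioo 0 t) := integrableOn_log_div_Ioo hu ht.le
  calc ∫ ε in Ioo 0 t, √(log (u / ε))
      ≤ ∫ ε in Ioo 0 t, (log (u / ε) + τ) / (2 * √τ) :=
        setIntegral_mono_of_nonneg (fun _ _ ↦ sqrt_nonneg _) hbound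
          ((hint.add (integrableOn_const measure_Ioo_lt_top.ne)).div_const _)
    _ = (t * (τ + 1) + t * τ) / (2 * √τ) := by
        rw [integral_div, integral_add hint (integrableOn_const measure_Ioo_lt_top.ne),
          integral_log_div_Ioo hu ht, setIntegral_const]
        simp [τ, ht.le]
    _ = t / (2 * √τ) * (1 + 2 * τ) := by ring
end

section
/- For every real k > 0 there exists a constant C_k > 0 depending only on k such that for all real numbers u and t with 0 < t < u, writing τ = log(u/t), one has ∫₀ᵗ (u/ε)^{1/4}·(log(u/ε))^k dε ≤ C_k·u^{1/4}·t^{3/4}·(1 + τ^k). -/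
/-!
Split `log (u/ε) = log (u/t) + log (t/ε)`. The first summand is the constant `τ`; the
second grows only logarithmically as `ε → 0`, so `log (t/ε) ^ k ≤ (4k)^k (t/ε)^{1/4}`. The
integrand is therefore bounded by `2^k u^{1/4} (τ^k ε^{-1/4} + (4k)^k t^{1/4} ε^{-1/2})`, whose
integral over `(0, t)` is `2^k u^{1/4} t^{3/4} (4/3 τ^k + 2 (4k)^k)`.
-/

open MeasureTheory Real Set

namespace Real

lemma add_rpow_le_two_rpow_mul_rpow_add_rpow {a b p : ℝ} (ha : 0 ≤ a) (hb : 0 ≤ b)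
    (hp : 0 ≤ p) : (a + b) ^ p ≤ 2 ^ p * (a ^ p + b ^ p) := calc
  (a + b) ^ p ≤ (2 * max a b) ^ p := by
    rw [two_mul]
    exact rpow_le_rpow (by positivity) (add_le_add (le_max_left a b) (le_max_right a b)) hp
  _ = 2 ^ p * max (a ^ p) (b ^ p) := by
    rw [mul_rpow zero_le_two (ha.trans (le_max_left a b)), rpow_max ha hb hp]
  _ ≤ 2 ^ p * (a ^ p + b ^ p) := by
    gcongr; exact max_le_add_of_nonneg (rpow_nonneg ha p) (rpow_nonneg hb p)

lemma log_rpow_le_mul_rpow {x k p : ℝ} (hx : 1 ≤ x) (hk : 0 < k) (hp : 0 < p) :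
    log x ^ k ≤ (k / p) ^ k * x ^ p := calc
  log x ^ k ≤ (x ^ (p / k) / (p / k)) ^ k :=
    rpow_le_rpow (log_nonneg hx) (log_le_rpow_div (by linarith) (by positivity)) hk.le
  _ = (k / p) ^ k * x ^ p := by
    rw [div_div_eq_mul_div, mul_div_assoc, mul_comm, mul_rpow (by positivity) (by positivity),
      ← rpow_mul (by linarith), div_mul_cancel₀ p hk.ne']

end Real

lemma integral_Ioo_rpow {t r : ℝ} (ht : 0 ≤ t) (hr : -1 < r) :
    ∫ x in Ioo 0 t, x ^ r = t ^ (r + 1) / (r + 1) := by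
  rw [← integral_Ioc_eq_integral_Ioo, ← intervalIntegral.integral_of_le ht,
    integral_rpow (Or.inl hr), zero_rpow (by linarith), sub_zero]

lemma rpow_one_fourth_mul_log_rpow_le {k u t ε : ℝ} (hk : 0 < k) (hε : 0 < ε) (hεt : ε < t)
    (htu : t ≤ u) :
    (u / ε) ^ (1 / 4 : ℝ) * log (u / ε) ^ k ≤
      2 ^ k * u ^ (1 / 4 : ℝ) *
        (log (u / t) ^ k * ε ^ (-(1 / 4) : ℝ) +
          (4 * k) ^ k * t ^ (1 / 4 : ℝ) * ε ^ (-(1 / 2) : ℝ)) := by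
  have ht : 0 < t := hε.trans hεt
  have hu : 0 < u := ht.trans_le htu
  have hτ : 0 ≤ log (u / t) := log_nonneg ((one_le_div ht).2 htu)
  have hlog_t : 0 ≤ log (t / ε) := log_nonneg ((one_le_div hε).2 hεt.le)
  have hsplit : log (u / ε) = log (u / t) + log (t / ε) := by
    rw [← log_mul (div_pos hu ht).ne' (div_pos ht hε).ne', div_mul_div_cancel₀ ht.ne']
  have hlog_t_le : log (t / ε) ^ k ≤ (4 * k) ^ k * (t / ε) ^ (1 / 4 : ℝ) := by
    simpa [div_div_eq_mul_div, mul_comm] using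
      log_rpow_le_mul_rpow ((one_le_div hε).2 hεt.le) hk (by norm_num : (0 : ℝ) < 1 / 4)
  have hpow {a : ℝ} (ha : 0 ≤ a) :
      (a / ε) ^ (1 / 4 : ℝ) = a ^ (1 / 4 : ℝ) * ε ^ (-(1 / 4) : ℝ) := by
    rw [div_rpow ha hε.le, rpow_neg hε.le, div_eq_mul_inv]
  have hhalf : ε ^ (-(1 / 2) : ℝ) = ε ^ (-(1 / 4) : ℝ) * ε ^ (-(1 / 4) : ℝ) := by
    rw [← rpow_add hε]; norm_num
  calc (u / ε) ^ (1 / 4 : ℝ) * log (u / ε) ^ k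
      ≤ (u / ε) ^ (1 / 4 : ℝ) *
          (2 ^ k * (log (u / t) ^ k + (4 * k) ^ k * (t / ε) ^ (1 / 4 : ℝ))) := by
        rw [hsplit]
        refine mul_le_mul_of_nonneg_left ?_ (by positivity)
        exact (add_rpow_le_two_rpow_mul_rpow_add_rpow hτ hlog_t hk.le).trans (by gcongr)
    _ = _ := by rw [hpow hu.le, hpow ht.le, hhalf]; ring

lemma integral_rpow_one_fourth_mul_log_rpow_le {k u t : ℝ} (hk : 0 < k) (ht : 0 < t)
    (htu : t ≤ u) :
    ∫ ε in Ioo 0 t, (u / ε) ^ (1 / 4 : ℝ) * log (u / ε) ^ k ≤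
      2 ^ k * u ^ (1 / 4 : ℝ) * t ^ (3 / 4 : ℝ) *
        (4 / 3 * log (u / t) ^ k + 2 * (4 * k) ^ k) := by
  have hu : 0 < u := ht.trans_le htu
  set τ := log (u / t)
  set c := (4 * k) ^ k
  have hint {r : ℝ} (hr : -1 < r) (a : ℝ) :
      IntegrableOn (fun ε : ℝ ↦ a * ε ^ r) (Ioo 0 t) :=
    ((intervalIntegral.integrableOn_Ioo_rpow_iff ht).2 hr).const_mul a
  have hint₁ := hint (r := -(1 / 4)) (by norm_num) (τ ^ k)
  have hint₂ := hint (r := -(1 / 2)) (by norm_num) (c * t ^ (1 / 4 : ℝ))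
  have hnonneg : ∀ ε ∈ Ioo 0 t, 0 ≤ (u / ε) ^ (1 / 4 : ℝ) * log (u / ε) ^ k :=
    fun ε hε ↦ mul_nonneg (rpow_nonneg (div_pos hu hε.1).le _)
      (rpow_nonneg (log_nonneg ((one_le_div hε.1).2 (hε.2.le.trans htu))) _)
  calc ∫ ε in Ioo 0 t, (u / ε) ^ (1 / 4 : ℝ) * log (u / ε) ^ k
      ≤ ∫ ε in Ioo 0 t, 2 ^ k * u ^ (1 / 4 : ℝ) *
          (τ ^ k * ε ^ (-(1 / 4) : ℝ) + c * t ^ (1 / 4 : ℝ) * ε ^ (-(1 / 2) : ℝ)) :=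
        integral_mono_of_nonneg (ae_restrict_of_forall_mem measurableSet_Ioo hnonneg)
          ((hint₁.add hint₂).const_mul _)
          (ae_restrict_of_forall_mem measurableSet_Ioo fun ε hε ↦
            rpow_one_fourth_mul_log_rpow_le hk hε.1 hε.2 htu)
    _ = 2 ^ k * u ^ (1 / 4 : ℝ) * (τ ^ k * (t ^ (3 / 4 : ℝ) / (3 / 4)) +
          c * t ^ (1 / 4 : ℝ) * (t ^ (1 / 2 : ℝ) / (1 / 2))) := by
        rw [integral_const_mul, integral_add hint₁ hint₂, integral_const_mul,
          integral_const_mul, integral_Ioo_rpow ht.le (by norm_num),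
          integral_Ioo_rpow ht.le (by norm_num)]
        norm_num
    _ = _ := by
        have htt : t ^ (1 / 4 : ℝ) * t ^ (1 / 2 : ℝ) = t ^ (3 / 4 : ℝ) := by
          rw [← rpow_add ht]; norm_num
        linear_combination 2 * 2 ^ k * u ^ (1 / 4 : ℝ) * c * htt

/-- For every `k > 0` there is a constant `C_k > 0` such that for all
`0 < t < u`, with `τ = log (u/t)`,
`∫₀ᵗ (u/ε)^{1/4} (log (u/ε))^k dε ≤ C_k u^{1/4} t^{3/4} (1 + τ^k)`. -/
theorem statement8 (k : ℝ) (hk : 0 < k) :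
    ∃ C : ℝ, 0 < C ∧
      ∀ u t : ℝ, 0 < t → t < u →
        (∫ ε in Set.Ioo (0 : ℝ) t, (u / ε) ^ ((1 : ℝ) / 4) * Real.log (u / ε) ^ k) ≤
          C * u ^ ((1 : ℝ) / 4) * t ^ ((3 : ℝ) / 4) * (1 + Real.log (u / t) ^ k) := by
  set c := (4 * k) ^ k
  refine ⟨2 ^ k * (4 / 3 + 2 * c), by positivity, fun u t ht htu ↦ ?_⟩
  have hτ : 0 ≤ log (u / t) ^ k := rpow_nonneg (log_nonneg ((one_le_div ht).2 htu.le)) k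
  have hc : 0 ≤ c := by positivity
  have hu : 0 < u := ht.trans htu
  calc _ ≤ 2 ^ k * u ^ (1 / 4 : ℝ) * t ^ (3 / 4 : ℝ) * (4 / 3 * log (u / t) ^ k + 2 * c) :=
        integral_rpow_one_fourth_mul_log_rpow_le hk ht htu.le
    _ ≤ 2 ^ k * u ^ (1 / 4 : ℝ) * t ^ (3 / 4 : ℝ) *
          ((4 / 3 + 2 * c) * (1 + log (u / t) ^ k)) := by
        gcongr; nlinarith
    _ = _ := by ring
end

section
/- Let d ≥ 1, let x^(1),…,x^(n) ∈ [0,1]^d be design points, and let (a₀, {ν_S}) be a MARS representation. Then there exists a MARS representation (a₀, {μ_S}) with the same constant a₀, in which for every nonempty S ⊆ {1,…,d} the signed measure μ_S is concentrated on the finite set (∏_{k∈S} U_k) ∩ ∏_{j∈S}[0,1), such that f_{a₀,{μ_S}}(x^(i)) = f_{a₀,{ν_S}}(x^(i)) for every i ∈ {1,…,n}, and V({μ_S}) ≤ V({ν_S}). -/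
/-!
On each coordinate the hat functions of the nodes `U_k` form a partition of unity on `[0,1)` and
reproduce exactly every hinge `t ↦ (x - t)₊` whose kink `x` is a node; their tensor products `w_p`
do the same for `t ↦ ∏ⱼ (xⱼ - tⱼ)₊` on the cube, and the nodes at `1` can be dropped since these
hinges vanish there. So replacing `ν_S` by the discrete measure giving each grid node `p` the mass
`∫ w_p dν_S` keeps the fitted values at the design points. The variation does not increase:
`|∫ w_p dν_S| ≤ ∫ w_p d|ν_S|`, and the `w_p` with `p ≠ 0` sum to at most the indicator of the
cube minus the origin, where they all vanish.
-/

open Finset MeasureTheory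
open scoped ENNReal

/-- A MARS representation: a constant `a0` together with, for each (nonempty) subset `S`
of coordinates, a finite signed Borel measure on `ℝ^S` concentrated on `Π_{j∈S} [0,1)`. -/
structure MarsRep (d : ℕ) where
  a0 : ℝ
  ν : ∀ S : Finset (Fin d), SignedMeasure ({j // j ∈ S} → ℝ)
  conc : ∀ S : Finset (Fin d),
    (ν S).totalVariation {t : {j // j ∈ S} → ℝ | ∀ j, 0 ≤ t j ∧ t j < 1}ᶜ = 0

/-- Integration of a real function against a finite signed measure. -/
noncomputable def sIntegral {α : Type*} [MeasurableSpace α]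
    (ν : SignedMeasure α) (f : α → ℝ) : ℝ :=
  (∫ t, f t ∂ν.toJordanDecomposition.posPart) -
    (∫ t, f t ∂ν.toJordanDecomposition.negPart)

/-- The function `f_{a₀,{ν_S}}` associated with a MARS representation. -/
noncomputable def marsFun {d : ℕ} (R : MarsRep d) (x : Fin d → ℝ) : ℝ :=
  R.a0 + ∑ S : Finset (Fin d),
    if S.Nonempty then
      sIntegral (R.ν S) fun t => ∏ j : {j // j ∈ S}, max (x j.1 - t j) 0
    else 0

/-- The variation `V({ν_S}) = Σ_{∅ ≠ S} |ν_S|(Π_{j∈S}[0,1) \ {0})` of a MARS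
representation. -/
noncomputable def marsVar {d : ℕ} (R : MarsRep d) : ℝ≥0∞ :=
  ∑ S : Finset (Fin d),
    if S.Nonempty then
      (R.ν S).totalVariation
        ({t : {j // j ∈ S} → ℝ | ∀ j, 0 ≤ t j ∧ t j < 1} \ {fun _ => 0})
    else 0


open scoped NNReal

noncomputable section

namespace HatBasis

variable (U : Finset ℝ)

/- `lo U t ≤ t < hi U t` are the nodes of `U` next to `t ∈ [0,1)`. The inserted `0` and `1` keep
`lo` and `hi` monotone on all of `ℝ`, and change nothing on `[0,1)` once `0, 1 ∈ U`. -/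
def lo (t : ℝ) : ℝ := sSup (insert 0 {u | u ∈ U ∧ u ≤ t})

def hi (t : ℝ) : ℝ := sInf (insert 1 {u | u ∈ U ∧ t < u})

/-- The piecewise linear hat function of the node `u`, restricted to `[0,1)`. -/
def hat (u t : ℝ) : ℝ :=
  if t ∈ Set.Ico (0 : ℝ) 1 then
    (if lo U t = u then (hi U t - t) / (hi U t - lo U t) else 0) +
      (if hi U t = u then (t - lo U t) / (hi U t - lo U t) else 0)
  else 0

variable {U}

lemma finite_lo_set (t : ℝ) : (insert 0 {u | u ∈ U ∧ u ≤ t}).Finite :=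
  (U.finite_toSet.subset fun _ hu => hu.1).insert 0

lemma finite_hi_set (t : ℝ) : (insert 1 {u | u ∈ U ∧ t < u}).Finite :=
  (U.finite_toSet.subset fun _ hu => hu.1).insert 1

lemma le_lo {u t : ℝ} (hu : u ∈ U) (hut : u ≤ t) : u ≤ lo U t :=
  le_csSup (finite_lo_set t).bddAbove (Set.mem_insert_of_mem _ ⟨hu, hut⟩)

lemma lo_nonneg (t : ℝ) : 0 ≤ lo U t :=
  le_csSup (finite_lo_set t).bddAbove (Set.mem_insert _ _)

lemma lo_le {t : ℝ} (ht : 0 ≤ t) : lo U t ≤ t :=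
  csSup_le (Set.insert_nonempty _ _) fun _ hu => hu.elim (· ▸ ht) (·.2)

lemma lo_mem (h0 : 0 ∈ U) (t : ℝ) : lo U t ∈ U := by
  rcases (Set.insert_nonempty _ _).csSup_mem (finite_lo_set (U := U) t) with h | h
  · rwa [lo, h]
  · exact h.1

lemma hi_le {u t : ℝ} (hu : u ∈ U) (htu : t < u) : hi U t ≤ u :=
  csInf_le (finite_hi_set t).bddBelow (Set.mem_insert_of_mem _ ⟨hu, htu⟩)

lemma lt_hi {t : ℝ} (ht : t < 1) : t < hi U t := by
  rcases (Set.insert_nonempty _ _).csInf_mem (finite_hi_set (U := U) t) with h | h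
  · rwa [hi, h]
  · exact h.2

lemma hi_mem (h1 : 1 ∈ U) (t : ℝ) : hi U t ∈ U := by
  rcases (Set.insert_nonempty _ _).csInf_mem (finite_hi_set (U := U) t) with h | h
  · rwa [hi, h]
  · exact h.1

lemma lo_lt_hi {t : ℝ} (ht : t ∈ Set.Ico (0 : ℝ) 1) : lo U t < hi U t :=
  (lo_le ht.1).trans_lt (lt_hi ht.2)

lemma lo_zero : lo U 0 = 0 :=
  le_antisymm (lo_le le_rfl) (lo_nonneg 0)

lemma monotone_lo : Monotone (lo U) := fun _ _ htt' =>
  csSup_le_csSup (finite_lo_set _).bddAbove (Set.insert_nonempty _ _)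
    (Set.insert_subset_insert fun _ hu => ⟨hu.1, hu.2.trans htt'⟩)

lemma monotone_hi : Monotone (hi U) := fun _ _ htt' =>
  csInf_le_csInf (finite_hi_set _).bddBelow (Set.insert_nonempty _ _)
    (Set.insert_subset_insert fun _ hu => ⟨hu.1, htt'.trans_lt hu.2⟩)

lemma measurable_hat (u : ℝ) : Measurable (hat U u) := by
  have hlo : Measurable (lo U) := monotone_lo.measurable
  have hhi : Measurable (hi U) := monotone_hi.measurable
  refine Measurable.ite measurableSet_Ico (Measurable.add ?_ ?_) measurable_const
  · exact Measurable.ite (hlo (MeasurableSet.singleton u))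
      ((hhi.sub measurable_id).div (hhi.sub hlo)) measurable_const
  · exact Measurable.ite (hhi (MeasurableSet.singleton u))
      ((measurable_id.sub hlo).div (hhi.sub hlo)) measurable_const

lemma hat_of_notMem {u t : ℝ} (ht : t ∉ Set.Ico (0 : ℝ) 1) : hat U u t = 0 := by
  simp [hat, ht]

lemma hat_nonneg (u t : ℝ) : 0 ≤ hat U u t := by
  by_cases ht : t ∈ Set.Ico (0 : ℝ) 1
  · have hD := (sub_pos.2 (lo_lt_hi (U := U) ht)).le
    have e1 := div_nonneg (sub_nonneg.2 (lt_hi (U := U) ht.2).le) hD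
    have e2 := div_nonneg (sub_nonneg.2 (lo_le (U := U) ht.1)) hD
    simp only [hat, if_pos ht]
    split_ifs <;> positivity
  · rw [hat_of_notMem ht]

lemma hat_le_one (u t : ℝ) : hat U u t ≤ 1 := by
  by_cases ht : t ∈ Set.Ico (0 : ℝ) 1
  · have hD := sub_pos.2 (lo_lt_hi (U := U) ht)
    have e1 := div_nonneg (sub_nonneg.2 (lt_hi (U := U) ht.2).le) hD.le
    have e2 := div_nonneg (sub_nonneg.2 (lo_le (U := U) ht.1)) hD.le
    have hsum : (hi U t - t) / (hi U t - lo U t) + (t - lo U t) / (hi U t - lo U t) = 1 := by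
      field_simp; ring
    simp only [hat, if_pos ht]
    split_ifs <;> linarith
  · rw [hat_of_notMem ht]; exact zero_le_one

lemma eq_lo_or_eq_hi_of_hat_ne_zero {u t : ℝ} (h : hat U u t ≠ 0) :
    t ∈ Set.Ico (0 : ℝ) 1 ∧ (u = lo U t ∨ u = hi U t) := by
  by_cases ht : t ∈ Set.Ico (0 : ℝ) 1
  · refine ⟨ht, ?_⟩
    by_contra! hu
    simp [hat, ht, Ne.symm hu.1, Ne.symm hu.2] at h
  · exact absurd (hat_of_notMem ht) h

lemma hat_zero_right {u : ℝ} (hu : u ≠ 0) : hat U u 0 = 0 := by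
  simp [hat, lo_zero, Ne.symm hu]

section

variable (h0 : 0 ∈ U) (h1 : 1 ∈ U)
include h0 h1

lemma sum_hat {t : ℝ} (ht : t ∈ Set.Ico (0 : ℝ) 1) : ∑ u ∈ U, hat U u t = 1 := by
  have hD : hi U t - lo U t ≠ 0 := (sub_pos.2 (lo_lt_hi ht)).ne'
  simp only [hat, if_pos ht, Finset.sum_add_distrib, Finset.sum_ite_eq, lo_mem h0, hi_mem h1,
    if_true]
  field_simp
  ring

lemma sum_hat_le_one {s : Finset ℝ} (hs : s ⊆ U) (t : ℝ) : ∑ u ∈ s, hat U u t ≤ 1 := by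
  by_cases ht : t ∈ Set.Ico (0 : ℝ) 1
  · calc ∑ u ∈ s, hat U u t ≤ ∑ u ∈ U, hat U u t :=
          Finset.sum_le_sum_of_subset_of_nonneg hs fun u _ _ => hat_nonneg u t
      _ = 1 := sum_hat h0 h1 ht
  · simp [hat_of_notMem ht]

/- Exact because the hinge is affine on `[lo U t, hi U t]` when its kink `x` is a node. -/
lemma max_sub_zero_eq_sum_hat {x t : ℝ} (hx : x ∈ U) (ht : t ∈ Set.Ico (0 : ℝ) 1) :
    max (x - t) 0 = ∑ u ∈ U, hat U u t * max (x - u) 0 := by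
  have hD : hi U t - lo U t ≠ 0 := (sub_pos.2 (lo_lt_hi ht)).ne'
  simp only [hat, if_pos ht, add_mul, ite_mul, zero_mul, Finset.sum_add_distrib,
    Finset.sum_ite_eq, lo_mem h0, hi_mem h1, if_true]
  rcases le_or_gt x t with hxt | htx
  · have hx1 : x ≤ lo U t := le_lo hx hxt
    have hx2 : x ≤ hi U t := hx1.trans (lo_lt_hi ht).le
    rw [max_eq_right (sub_nonpos.2 hxt), max_eq_right (sub_nonpos.2 hx1),
      max_eq_right (sub_nonpos.2 hx2)]
    ring
  · have hx2 : hi U t ≤ x := hi_le hx htx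
    have hx1 : lo U t ≤ x := (lo_le ht.1).trans htx.le
    rw [max_eq_left (sub_nonneg.2 htx.le), max_eq_left (sub_nonneg.2 hx1),
      max_eq_left (sub_nonneg.2 hx2)]
    field_simp
    ring


lemma max_sub_zero_eq_sum_hat_Ico {x t : ℝ} (hx : x ∈ U) (hx1 : x ≤ 1)
    (ht : t ∈ Set.Ico (0 : ℝ) 1) :
    max (x - t) 0 = ∑ u ∈ U with u ∈ Set.Ico (0 : ℝ) 1, hat U u t * max (x - u) 0 := by
  rw [max_sub_zero_eq_sum_hat h0 h1 hx ht, Finset.sum_filter_of_ne]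
  intro u _ hu
  obtain ⟨ht, hlohi⟩ := eq_lo_or_eq_hi_of_hat_ne_zero (left_ne_zero_of_mul hu)
  have hux : u < x := by
    by_contra! h
    exact right_ne_zero_of_mul hu (max_eq_right (by linarith))
  refine ⟨?_, hux.trans_le hx1⟩
  rcases hlohi with rfl | rfl
  exacts [lo_nonneg t, ht.1.trans (lt_hi ht.2).le]

end

end HatBasis

def cube (ι : Type*) : Set (ι → ℝ) := {t | ∀ j, 0 ≤ t j ∧ t j < 1}

lemma measurableSet_cube {ι : Type*} [Countable ι] : MeasurableSet (cube ι) := by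
  have : cube ι = Set.univ.pi fun _ => Set.Ico (0 : ℝ) 1 := by ext; simp [cube]
  rw [this]
  exact MeasurableSet.univ_pi fun _ => measurableSet_Ico

namespace HatBasis

variable {ι : Type*} [Fintype ι] (U : ι → Finset ℝ)

def weight (p t : ι → ℝ) : ℝ := ∏ j, hat (U j) (p j) (t j)

variable {U}

lemma measurable_weight (p : ι → ℝ) : Measurable (weight U p) :=
  Finset.measurable_prod _ fun j _ => (measurable_hat (p j)).comp (measurable_pi_apply j)

lemma weight_nonneg (p t : ι → ℝ) : 0 ≤ weight U p t :=
  Finset.prod_nonneg fun _ _ => hat_nonneg _ _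

lemma weight_le_one (p t : ι → ℝ) : weight U p t ≤ 1 :=
  Finset.prod_le_one (fun _ _ => hat_nonneg _ _) fun _ _ => hat_le_one _ _

lemma weight_of_notMem_cube {p t : ι → ℝ} (ht : t ∉ cube ι) : weight U p t = 0 := by
  simp only [cube, Set.mem_ofPred_eq, not_forall] at ht
  obtain ⟨j, hj⟩ := ht
  exact Finset.prod_eq_zero (Finset.mem_univ j) (hat_of_notMem hj)

lemma weight_zero_right {p : ι → ℝ} (hp : p ≠ fun _ => 0) : weight U p (fun _ => 0) = 0 := by
  obtain ⟨j, hj⟩ := Function.ne_iff.1 hp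
  exact Finset.prod_eq_zero (Finset.mem_univ j) (hat_zero_right hj)

variable [DecidableEq ι]

variable (U) in
def grid : Finset (ι → ℝ) := Fintype.piFinset fun j => (U j).filter (· ∈ Set.Ico (0 : ℝ) 1)

lemma mem_grid {p : ι → ℝ} : p ∈ grid U ↔ ∀ j, p j ∈ U j ∧ 0 ≤ p j ∧ p j < 1 := by
  simp [grid, Fintype.mem_piFinset]

variable (h0 : ∀ j, 0 ∈ U j) (h1 : ∀ j, 1 ∈ U j)
include h0 h1

lemma sum_weight_le_one (t : ι → ℝ) : ∑ p ∈ grid U, weight U p t ≤ 1 := by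
  calc ∑ p ∈ grid U, weight U p t
      = ∏ j, ∑ u ∈ U j with u ∈ Set.Ico (0 : ℝ) 1, hat (U j) u (t j) :=
        (Finset.prod_univ_sum _ fun j u => hat (U j) u (t j)).symm
    _ ≤ 1 := Finset.prod_le_one (fun _ _ => Finset.sum_nonneg fun _ _ => hat_nonneg _ _)
        fun j _ => sum_hat_le_one (h0 j) (h1 j) (Finset.filter_subset _ _) _

lemma sum_weight_le_indicator [DecidablePred (· ∈ cube ι \ {fun _ => 0})] (t : ι → ℝ) :
    ∑ p ∈ grid U with p ∈ cube ι \ {fun _ => 0}, weight U p t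
      ≤ (cube ι \ {fun _ => 0}).indicator 1 t := by
  by_cases ht : t ∈ cube ι \ {fun _ => 0}
  · rw [Set.indicator_of_mem ht, Pi.one_apply]
    exact (Finset.sum_le_sum_of_subset_of_nonneg (Finset.filter_subset _ _)
      fun _ _ _ => weight_nonneg _ _).trans (sum_weight_le_one h0 h1 t)
  · rw [Set.indicator_of_notMem ht]
    refine (Finset.sum_eq_zero fun p hp => ?_).le
    rcases not_and_or.1 ht with htc | ht0
    · exact weight_of_notMem_cube htc
    · rw [not_not.1 ht0]
      exact weight_zero_right fun h => (Finset.mem_filter.1 hp).2.2 (Set.mem_singleton_iff.2 h)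

lemma hinge_eq_sum_weight {x t : ι → ℝ} (hx : ∀ j, x j ∈ U j) (hx1 : ∀ j, x j ≤ 1)
    (ht : t ∈ cube ι) :
    ∏ j, max (x j - t j) 0 = ∑ p ∈ grid U, weight U p t * ∏ j, max (x j - p j) 0 := by
  calc ∏ j, max (x j - t j) 0
      = ∏ j, ∑ u ∈ U j with u ∈ Set.Ico (0 : ℝ) 1, hat (U j) u (t j) * max (x j - u) 0 :=
        Finset.prod_congr rfl fun j _ =>
          max_sub_zero_eq_sum_hat_Ico (h0 j) (h1 j) (hx j) (hx1 j) (ht j)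
    _ = _ := by
        rw [Finset.prod_univ_sum]
        simp only [grid, weight, Finset.prod_mul_distrib]

end HatBasis

end

section SignedIntegral

variable {α : Type*} [MeasurableSpace α] (ν : SignedMeasure α)

lemma sIntegral_congr_ae {f g : α → ℝ} (h : f =ᵐ[ν.totalVariation] g) :
    sIntegral ν f = sIntegral ν g := by
  obtain ⟨hp, hn⟩ := ae_add_measure_iff.1 h
  rw [sIntegral, sIntegral, integral_congr_ae hp, integral_congr_ae hn]

lemma sIntegral_mul_const (f : α → ℝ) (c : ℝ) :
    sIntegral ν (fun t => f t * c) = sIntegral ν f * c := by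
  simp only [sIntegral, integral_mul_const, sub_mul]

lemma sIntegral_finsetSum {ι : Type*} (s : Finset ι) {f : ι → α → ℝ}
    (hf : ∀ i ∈ s, Integrable (f i) ν.totalVariation) :
    sIntegral ν (fun t => ∑ i ∈ s, f i t) = ∑ i ∈ s, sIntegral ν (f i) := by
  have hf' := fun i hi => integrable_add_measure.1 (hf i hi)
  rw [sIntegral, integral_finsetSum s fun i hi => (hf' i hi).1,
    integral_finsetSum s fun i hi => (hf' i hi).2, ← Finset.sum_sub_distrib]
  rfl

lemma abs_sIntegral_le {f : α → ℝ} (hf : Integrable f ν.totalVariation) :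
    |sIntegral ν f| ≤ ∫ t, |f t| ∂ν.totalVariation := by
  obtain ⟨hp, hn⟩ := integrable_add_measure.1 hf
  rw [SignedMeasure.totalVariation, integral_add_measure hp.abs hn.abs]
  exact (abs_sub _ _).trans (add_le_add (abs_integral_le_integral_abs)
    (abs_integral_le_integral_abs))

lemma sum_ofReal_abs_sIntegral_le {ι : Type*} (s : Finset ι) {w : ι → α → ℝ} {A : Set α}
    (hA : MeasurableSet A) (hw : ∀ i ∈ s, Integrable (w i) ν.totalVariation)
    (hw0 : ∀ i ∈ s, 0 ≤ w i) (hwA : ∀ t, ∑ i ∈ s, w i t ≤ A.indicator 1 t) :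
    ∑ i ∈ s, ENNReal.ofReal |sIntegral ν (w i)| ≤ ν.totalVariation A := by
  have hsum : ∑ i ∈ s, |sIntegral ν (w i)| ≤ ν.totalVariation.real A :=
    calc ∑ i ∈ s, |sIntegral ν (w i)|
        ≤ ∑ i ∈ s, ∫ t, w i t ∂ν.totalVariation :=
          Finset.sum_le_sum fun i hi => (abs_sIntegral_le ν (hw i hi)).trans_eq
            (integral_congr_ae (ae_of_all _ fun t => abs_of_nonneg (hw0 i hi t)))
      _ = ∫ t, ∑ i ∈ s, w i t ∂ν.totalVariation := (integral_finsetSum s hw).symm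
      _ ≤ ∫ t, A.indicator 1 t ∂ν.totalVariation :=
          integral_mono (integrable_finsetSum s hw)
            ((integrable_const (1 : ℝ)).indicator hA) hwA
      _ = ν.totalVariation.real A := integral_indicator_one hA
  rw [← ENNReal.ofReal_sum_of_nonneg fun i _ => abs_nonneg _, ← ofReal_measureReal]
  exact ENNReal.ofReal_le_ofReal hsum

end SignedIntegral

section DiscreteJordan

variable {α : Type*} [MeasurableSpace α] [MeasurableSingletonClass α] (P : Finset α) (c : α → ℝ)

noncomputable def discreteJordan : JordanDecomposition α where
  posPart := ∑ p ∈ P, (c p).toNNReal • Measure.dirac p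
  negPart := ∑ p ∈ P, (-c p).toNNReal • Measure.dirac p
  mutuallySingular := by
    refine ⟨↑(P.filter (c · < 0)), (Finset.finite_toSet _).measurableSet, ?_, ?_⟩
    · simp only [Measure.finsetSum_apply, Measure.smul_apply, Measure.dirac_apply]
      refine Finset.sum_eq_zero fun p hp => ?_
      by_cases h : c p < 0
      · simp [Real.toNNReal_of_nonpos h.le]
      · simp [h]
    · simp only [Measure.finsetSum_apply, Measure.smul_apply, Measure.dirac_apply]
      refine Finset.sum_eq_zero fun p hp => ?_
      by_cases h : c p < 0
      · simp [h, hp]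
      · simp [Real.toNNReal_of_nonpos (neg_nonpos.2 (not_lt.1 h))]

lemma sIntegral_discreteJordan (f : α → ℝ) :
    sIntegral (discreteJordan P c).toSignedMeasure f = ∑ p ∈ P, c p * f p := by
  have integral_sum_smul_dirac (r : α → ℝ≥0) :
      ∫ t, f t ∂(∑ p ∈ P, r p • Measure.dirac p) = ∑ p ∈ P, (r p : ℝ) * f p := by
    rw [integral_finsetSum_measure fun p _ =>
      (integrable_dirac enorm_lt_top).smul_measure_nnreal]
    simp [integral_smul_nnreal_measure, integral_dirac, NNReal.smul_def]
  rw [sIntegral, JordanDecomposition.toJordanDecomposition_toSignedMeasure]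
  simp only [discreteJordan, integral_sum_smul_dirac, ← Finset.sum_sub_distrib, ← sub_mul]
  refine Finset.sum_congr rfl fun p _ => ?_
  rcases le_total (c p) 0 with h | h
  · simp [Real.toNNReal_of_nonpos h, h]
  · simp [Real.toNNReal_of_nonpos (neg_nonpos.2 h), h]

lemma totalVariation_discreteJordan_apply (A : Set α) [DecidablePred (· ∈ A)] :
    (discreteJordan P c).toSignedMeasure.totalVariation A
      = ∑ p ∈ P with p ∈ A, ENNReal.ofReal |c p| := by
  rw [SignedMeasure.totalVariation, JordanDecomposition.toJordanDecomposition_toSignedMeasure]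
  simp only [discreteJordan, Measure.add_apply, Measure.finsetSum_apply, Measure.smul_apply,
    Measure.dirac_apply, ← Finset.sum_add_distrib, Finset.sum_filter]
  refine Finset.sum_congr rfl fun p _ => ?_
  by_cases hp : p ∈ A
  · rcases le_total (c p) 0 with h | h
    · simp [hp, Real.toNNReal_of_nonpos h, abs_of_nonpos h, ENNReal.ofReal]
    · simp [hp, Real.toNNReal_of_nonpos (neg_nonpos.2 h), abs_of_nonneg h, ENNReal.ofReal]
  · simp [hp]

end DiscreteJordan

section GridDiscretization

open HatBasis

variable {ι : Type*} [Fintype ι] [DecidableEq ι] (U : ι → Finset ℝ) (ν : SignedMeasure (ι → ℝ))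

noncomputable def gridDiscretization : SignedMeasure (ι → ℝ) :=
  (discreteJordan (grid U) fun p => sIntegral ν (weight U p)).toSignedMeasure

lemma totalVariation_gridDiscretization_compl :
    (gridDiscretization U ν).totalVariation {t | ∀ j, t j ∈ U j ∧ 0 ≤ t j ∧ t j < 1}ᶜ = 0 := by
  rw [gridDiscretization, totalVariation_discreteJordan_apply]
  exact Finset.sum_eq_zero fun p hp =>
    absurd (mem_grid.1 (Finset.mem_filter.1 hp).1) (Finset.mem_filter.1 hp).2

variable {U}

omit [DecidableEq ι] in
lemma integrable_weight (μ : Measure (ι → ℝ)) [IsFiniteMeasure μ] (p : ι → ℝ) :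
    Integrable (weight U p) μ :=
  Integrable.of_bound (measurable_weight p).aestronglyMeasurable 1 (ae_of_all _ fun t => by
    rw [Real.norm_eq_abs, abs_of_nonneg (weight_nonneg p t)]
    exact weight_le_one p t)

variable (h0 : ∀ j, 0 ∈ U j) (h1 : ∀ j, 1 ∈ U j)
include h0 h1

lemma sIntegral_gridDiscretization_hinge (hν : ν.totalVariation (cube ι)ᶜ = 0) {x : ι → ℝ}
    (hx : ∀ j, x j ∈ U j) (hx1 : ∀ j, x j ≤ 1) :
    sIntegral (gridDiscretization U ν) (fun t => ∏ j, max (x j - t j) 0)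
      = sIntegral ν (fun t => ∏ j, max (x j - t j) 0) := by
  have hcube : ∀ᵐ t ∂ν.totalVariation, t ∈ cube ι := measure_mono_null (fun _ => id) hν
  calc sIntegral (gridDiscretization U ν) (fun t => ∏ j, max (x j - t j) 0)
      = ∑ p ∈ grid U, sIntegral ν (weight U p) * ∏ j, max (x j - p j) 0 :=
        sIntegral_discreteJordan _ _ _
    _ = sIntegral ν (fun t => ∑ p ∈ grid U, weight U p t * ∏ j, max (x j - p j) 0) := by
        rw [sIntegral_finsetSum ν _ fun p _ => (integrable_weight _ p).mul_const _]
        simp only [sIntegral_mul_const]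
    _ = sIntegral ν (fun t => ∏ j, max (x j - t j) 0) :=
        sIntegral_congr_ae ν (hcube.mono fun t ht => (hinge_eq_sum_weight h0 h1 hx hx1 ht).symm)

open scoped Classical in
lemma totalVariation_gridDiscretization_le :
    (gridDiscretization U ν).totalVariation (cube ι \ {fun _ => 0})
      ≤ ν.totalVariation (cube ι \ {fun _ => 0}) := by
  rw [gridDiscretization, totalVariation_discreteJordan_apply]
  exact sum_ofReal_abs_sIntegral_le ν _
    (measurableSet_cube.diff (measurableSet_singleton _))
    (fun p _ => integrable_weight _ p) (fun p _ => weight_nonneg p)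
    (sum_weight_le_indicator h0 h1)

end GridDiscretization

namespace MarsRep

variable {d : ℕ} (U : Fin d → Finset ℝ)

noncomputable def discretize (R : MarsRep d) : MarsRep d where
  a0 := R.a0
  ν S := gridDiscretization (fun j : S => U j) (R.ν S)
  conc _ := measure_mono_null (Set.compl_subset_compl.2 fun _ ht j => (ht j).2)
    (totalVariation_gridDiscretization_compl _ _)

variable {U} (h0 : ∀ k, 0 ∈ U k) (h1 : ∀ k, 1 ∈ U k)
include h0 h1

lemma marsFun_discretize (R : MarsRep d) {x : Fin d → ℝ} (hx : ∀ k, x k ∈ U k)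
    (hx1 : ∀ k, x k ≤ 1) : marsFun (R.discretize U) x = marsFun R x := by
  refine congrArg (R.a0 + ·) (Finset.sum_congr rfl fun S _ => ?_)
  split_ifs
  · exact sIntegral_gridDiscretization_hinge (R.ν S) (fun j => h0 j) (fun j => h1 j) (R.conc S)
      (fun j => hx j) (fun j => hx1 j)
  · rfl

lemma marsVar_discretize_le (R : MarsRep d) : marsVar (R.discretize U) ≤ marsVar R :=
  Finset.sum_le_sum fun S _ => by
    split_ifs
    · exact totalVariation_gridDiscretization_le (R.ν S) (fun j => h0 j) (fun j => h1 j)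
    · rfl

end MarsRep

theorem statement9_general (d : ℕ) (nn : ℕ) (x : Fin nn → Fin d → ℝ)
    (hx : ∀ i k, x i k ∈ Set.Icc (0 : ℝ) 1) (R : MarsRep d) :
    ∃ R' : MarsRep d, R'.a0 = R.a0 ∧
      (∀ S : Finset (Fin d), S.Nonempty →
        (R'.ν S).totalVariation
          {t : {j // j ∈ S} → ℝ | ∀ j : {j // j ∈ S},
            (t j = 0 ∨ t j = 1 ∨ ∃ i, x i j.1 = t j) ∧ 0 ≤ t j ∧ t j < 1}ᶜ = 0) ∧
      (∀ i, marsFun R' (x i) = marsFun R (x i)) ∧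
      marsVar R' ≤ marsVar R := by
  set U : Fin d → Finset ℝ := fun k => insert 0 (insert 1 (Finset.univ.image fun i => x i k))
  have h0 (k : Fin d) : 0 ∈ U k := Finset.mem_insert_self _ _
  have h1 (k : Fin d) : 1 ∈ U k := Finset.mem_insert_of_mem (Finset.mem_insert_self _ _)
  have hxU (i : Fin nn) (k : Fin d) : x i k ∈ U k :=
    Finset.mem_insert_of_mem (Finset.mem_insert_of_mem (Finset.mem_image_of_mem _ (Finset.mem_univ i)))
  refine ⟨R.discretize U, rfl, fun S _ => ?_, fun i => R.marsFun_discretize h0 h1 (hxU i)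
    fun k => (hx i k).2, R.marsVar_discretize_le h0 h1⟩
  have hgrid : {t : S → ℝ | ∀ j : S, (t j = 0 ∨ t j = 1 ∨ ∃ i, x i j.1 = t j) ∧ 0 ≤ t j ∧ t j < 1}
      = {t | ∀ j : S, t j ∈ U j ∧ 0 ≤ t j ∧ t j < 1} := by
    ext
    simp [U]
  rw [hgrid]
  exact totalVariation_gridDiscretization_compl _ _

/-- Discretization: any MARS representation can be replaced, without
changing the fitted values at the design points and without increasing the variation,
by one whose measures are concentrated on the finite grid
`(Π_{k∈S} U_k) ∩ Π_{j∈S}[0,1)`, where `U_k = {0,1} ∪ {x_k^{(i)}}`. -/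
theorem statement9 (d : ℕ) (hd : 1 ≤ d) (nn : ℕ) (x : Fin nn → Fin d → ℝ)
    (hx : ∀ i k, x i k ∈ Set.Icc (0 : ℝ) 1) (R : MarsRep d) :
    ∃ R' : MarsRep d, R'.a0 = R.a0 ∧
      (∀ S : Finset (Fin d), S.Nonempty →
        (R'.ν S).totalVariation
          {t : {j // j ∈ S} → ℝ | ∀ j : {j // j ∈ S},
            (t j = 0 ∨ t j = 1 ∨ ∃ i, x i j.1 = t j) ∧ 0 ≤ t j ∧ t j < 1}ᶜ = 0) ∧
      (∀ i, marsFun R' (x i) = marsFun R (x i)) ∧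
      marsVar R' ≤ marsVar R :=
  statement9_general d nn x hx R
end

section
/- Let d ≥ 1 and let (a₀, {ν_S}) and (b₀, {μ_S}) be two MARS representations. If f_{a₀,{ν_S}}(x) = f_{b₀,{μ_S}}(x) for every x ∈ [0,1]^d, then a₀ = b₀ and ν_S = μ_S for every nonempty S ⊆ {1,…,d}. -/
/-!
At a point `x` supported on `S`, the mixed difference `Δ_h^S f (x) = Σ_{T ⊆ S} ± f (x + h 1_T)`
kills the constant `a₀` and every term `ν_{S'}` with `S' ≠ S`: if `S ⊄ S'` the integrand does not
depend on a coordinate of `S \ S'`, and if `S ⊊ S'` it contains a factor `max (0 - t_j) 0`, which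
vanishes on the support of `ν_{S'}`. What is left is
`∫ ∏_{j ∈ S} (max (x_j + h - t_j) 0 - max (x_j - t_j) 0) dν_S`; divided by `h^|S|` it tends, by
dominated convergence, to `ν_S (Π_{j ∈ S} (-∞, x_j))` as `h → 0⁻`. Letting `h` tend to `0` from the
left keeps the points `x + h 1_T` in `[0,1]^d` for every `x ∈ (0,1]^S`, so `f` determines `ν_S` on
these orthants, and they determine a signed measure living on `[0,1)^S`. Evaluating `f` at `0`
gives `a₀`.
-/

open Finset MeasureTheory
open scoped ENNReal

open Set Filter
open scoped Topology

section BoxDiff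

variable {ι : Type*} [DecidableEq ι]

/-- `Δ_h^S f (x)`; the sign `(-1)^(#S + #T)` is `(-1)^(|S| - |T|)` without truncated subtraction. -/
def boxDiff (f : (ι → ℝ) → ℝ) (S : Finset ι) (h : ℝ) (x : ι → ℝ) : ℝ :=
  ∑ T ∈ S.powerset, (-1) ^ (#S + #T) * f fun j => x j + if j ∈ T then h else 0

variable {S : Finset ι} {h : ℝ} {x : ι → ℝ}

lemma boxDiff_congr {f g : (ι → ℝ) → ℝ}
    (hfg : ∀ T ⊆ S, f (fun j => x j + if j ∈ T then h else 0) =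
      g fun j => x j + if j ∈ T then h else 0) :
    boxDiff f S h x = boxDiff g S h x :=
  Finset.sum_congr rfl fun T hT => by rw [hfg T (mem_powerset.mp hT)]

lemma boxDiff_const_mul (c : ℝ) (f : (ι → ℝ) → ℝ) :
    boxDiff (fun y => c * f y) S h x = c * boxDiff f S h x := by
  simp only [boxDiff, Finset.mul_sum]
  exact Finset.sum_congr rfl fun T _ => by ring

lemma boxDiff_const_add (hS : S.Nonempty) (c : ℝ) (f : (ι → ℝ) → ℝ) :
    boxDiff (fun y => c + f y) S h x = boxDiff f S h x := by
  have hsigns : ∑ T ∈ S.powerset, (-1 : ℝ) ^ (#S + #T) = 0 := by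
    have hcard : ∑ T ∈ S.powerset, (-1 : ℝ) ^ #T = 0 := by
      exact_mod_cast Finset.sum_powerset_neg_one_pow_card_of_nonempty hS
    simp only [pow_add, ← Finset.mul_sum, hcard, mul_zero]
  simp only [boxDiff, mul_add, Finset.sum_add_distrib, ← Finset.sum_mul, hsigns, zero_mul,
    zero_add]

lemma boxDiff_sum {κ : Type*} (U : Finset κ) (f : κ → (ι → ℝ) → ℝ) :
    boxDiff (fun y => ∑ i ∈ U, f i y) S h x = ∑ i ∈ U, boxDiff (f i) S h x := by
  simp only [boxDiff, Finset.mul_sum]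
  exact Finset.sum_comm

lemma boxDiff_insert {a : ι} (ha : a ∉ S) (f : (ι → ℝ) → ℝ) :
    boxDiff f (insert a S) h x =
      boxDiff (fun y => f (Function.update y a (x a + h)) - f y) S h x := by
  rw [boxDiff, Finset.sum_powerset_insert ha, ← Finset.sum_add_distrib]
  refine Finset.sum_congr rfl fun T hT => ?_
  have haT : a ∉ T := fun haT => ha (mem_powerset.mp hT haT)
  have hpoint : (fun j => x j + if j ∈ insert a T then h else 0) =
      Function.update (fun j => x j + if j ∈ T then h else 0) a (x a + h) := by
    funext j
    by_cases hja : j = a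
    · subst hja; simp
    · simp [hja]
  rw [card_insert_of_notMem ha, card_insert_of_notMem haT, hpoint]
  ring

lemma boxDiff_eq_zero_of_update_eq {a : ι} (ha : a ∈ S) {f : (ι → ℝ) → ℝ}
    (hf : ∀ y s, f (Function.update y a s) = f y) : boxDiff f S h x = 0 := by
  rw [← insert_erase ha, boxDiff_insert (notMem_erase a S)]
  simp [hf, boxDiff]

lemma boxDiff_prod (φ : ι → ℝ → ℝ) (S : Finset ι) :
    boxDiff (fun y => ∏ j ∈ S, φ j (y j)) S h x = ∏ j ∈ S, (φ j (x j + h) - φ j (x j)) := by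
  induction S using Finset.induction_on with
  | empty => simp [boxDiff]
  | @insert a S ha ih =>
    rw [boxDiff_insert ha, prod_insert ha, ← ih, ← boxDiff_const_mul]
    refine boxDiff_congr fun T hT => ?_
    have haT : a ∉ T := fun haT => ha (hT haT)
    have hS : ∀ y c, ∏ j ∈ S, φ j (Function.update y a c j) = ∏ j ∈ S, φ j (y j) :=
      fun y c => Finset.prod_congr rfl fun j hj => by
        rw [Function.update_of_ne (ne_of_mem_of_not_mem hj ha)]
    simp only [prod_insert ha, Function.update_self, hS, haT, if_false, add_zero]
    ring

end BoxDiff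

namespace MeasureTheory.SignedMeasure

variable {α : Type*} [MeasurableSpace α]

lemma posPart_le_totalVariation (ν : SignedMeasure α) :
    ν.toJordanDecomposition.posPart ≤ ν.totalVariation :=
  Measure.le_add_right le_rfl

lemma negPart_le_totalVariation (ν : SignedMeasure α) :
    ν.toJordanDecomposition.negPart ≤ ν.totalVariation :=
  Measure.le_add_left le_rfl

lemma eq_iff_posPart_add_negPart_apply_eq {ν ν' : SignedMeasure α} {A : Set α}
    (hA : MeasurableSet A) :
    ν A = ν' A ↔ (ν.toJordanDecomposition.posPart + ν'.toJordanDecomposition.negPart) A =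
      (ν'.toJordanDecomposition.posPart + ν.toJordanDecomposition.negPart) A := by
  rw [← measureReal_eq_measureReal_iff, measureReal_add_apply, measureReal_add_apply,
    ν.apply_eq_posPart_real_sub_negPart_real hA, ν'.apply_eq_posPart_real_sub_negPart_real hA]
  constructor <;> intro h <;> linarith

end MeasureTheory.SignedMeasure

section sIntegral

variable {α : Type*} [MeasurableSpace α] (ν : SignedMeasure α)

lemma sIntegral_eq_zero_of_ae {f : α → ℝ} (hf : f =ᵐ[ν.totalVariation] 0) :
    sIntegral ν f = 0 := by
  rw [sIntegral,
    integral_eq_zero_of_ae (ae_mono (ν.posPart_le_totalVariation) hf),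
    integral_eq_zero_of_ae (ae_mono (ν.negPart_le_totalVariation) hf), sub_zero]

lemma sIntegral_div_const (f : α → ℝ) (c : ℝ) :
    sIntegral ν (fun t => f t / c) = sIntegral ν f / c := by
  simp only [sIntegral, integral_div, sub_div]

lemma sIntegral_finset_sum {κ : Type*} (U : Finset κ) (c : κ → ℝ) {f : κ → α → ℝ}
    (hf : ∀ i ∈ U, Integrable (f i) ν.totalVariation) :
    sIntegral ν (fun t => ∑ i ∈ U, c i * f i t) = ∑ i ∈ U, c i * sIntegral ν (f i) := by
  have hp := fun i hi => ((hf i hi).mono_measure ν.posPart_le_totalVariation).const_mul (c i)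
  have hn := fun i hi => ((hf i hi).mono_measure ν.negPart_le_totalVariation).const_mul (c i)
  simp only [sIntegral, integral_finsetSum U hp, integral_finsetSum U hn, integral_const_mul,
    mul_sub, Finset.sum_sub_distrib]

lemma boxDiff_sIntegral {ι : Type*} [DecidableEq ι] {G : (ι → ℝ) → α → ℝ}
    (hG : ∀ y, Integrable (G y) ν.totalVariation) (S : Finset ι) (h : ℝ) (x : ι → ℝ) :
    boxDiff (fun y => sIntegral ν (G y)) S h x =
      sIntegral ν (fun t => boxDiff (fun y => G y t) S h x) :=
  (sIntegral_finset_sum ν _ _ fun _ _ => hG _).symm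

end sIntegral

section Slope

lemma slope_max_sub_mem_Icc (a s : ℝ) {h : ℝ} (hh : h < 0) :
    (max (a + h - s) 0 - max (a - s) 0) / h ∈ Set.Icc 0 1 := by
  refine ⟨div_nonneg_of_nonpos ?_ hh.le, (div_le_one_of_neg hh).mpr ?_⟩
  · linarith [max_le_max_right 0 (by linarith : a + h - s ≤ a - s)]
  · have := le_max_left (a + h - s) 0
    have := le_max_right (a + h - s) 0
    have : max (a - s) 0 ≤ max (a + h - s) 0 - h := max_le (by linarith) (by linarith)
    linarith

lemma tendsto_slope_max_sub (a s : ℝ) :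
    Tendsto (fun h => (max (a + h - s) 0 - max (a - s) 0) / h) (𝓝[<] 0)
      (𝓝 (if s < a then 1 else 0)) := by
  split_ifs with hs
  · refine tendsto_const_nhds.congr' ?_
    filter_upwards [Ioo_mem_nhdsLT (by linarith : s - a < 0)] with h hh
    rw [max_eq_left (by linarith [hh.1]), max_eq_left (by linarith), add_sub_right_comm,
      add_sub_cancel_left, div_self hh.2.ne]
  · refine tendsto_const_nhds.congr' ?_
    filter_upwards [self_mem_nhdsWithin] with h (hh : h < 0)
    rw [max_eq_right (by linarith), max_eq_right (by linarith), sub_zero, zero_div]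

variable {κ : Type*} [Fintype κ]

lemma tendsto_integral_prod_slope_max (μ : Measure (κ → ℝ)) [IsFiniteMeasure μ] (x : κ → ℝ) :
    Tendsto (fun h => ∫ t, ∏ k, (max (x k + h - t k) 0 - max (x k - t k) 0) / h ∂μ)
      (𝓝[<] 0) (𝓝 (μ.real (pi univ fun k => Iio (x k)))) := by
  have hlim : ∀ t : κ → ℝ, (pi univ fun k => Iio (x k)).indicator (1 : (κ → ℝ) → ℝ) t =
      ∏ k, if t k < x k then 1 else 0 := fun t => by
    rw [Fintype.prod_boole]
    by_cases ht : ∀ k, t k < x k <;> simp [ht]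
  rw [← integral_indicator_one (MeasurableSet.univ_pi fun _ => measurableSet_Iio)]
  refine tendsto_integral_filter_of_dominated_convergence (fun _ => 1) ?_ ?_
    (integrable_const 1) (ae_of_all _ fun t => ?_)
  · exact Eventually.of_forall fun h => Continuous.aestronglyMeasurable (by fun_prop)
  · filter_upwards [self_mem_nhdsWithin] with h (hh : h < 0)
    refine ae_of_all _ fun t => ?_
    rw [Real.norm_eq_abs, Finset.abs_prod]
    exact Finset.prod_le_one (fun _ _ => abs_nonneg _) fun k _ => by
      rw [abs_of_nonneg (slope_max_sub_mem_Icc _ _ hh).1]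
      exact (slope_max_sub_mem_Icc _ _ hh).2
  · rw [hlim]
    exact tendsto_finsetProd _ fun k _ => tendsto_slope_max_sub (x k) (t k)

lemma tendsto_sIntegral_prod_slope_max (ν : SignedMeasure (κ → ℝ)) (x : κ → ℝ) :
    Tendsto (fun h => sIntegral ν fun t => ∏ k, (max (x k + h - t k) 0 - max (x k - t k) 0) / h)
      (𝓝[<] 0) (𝓝 (ν (pi univ fun k => Iio (x k)))) := by
  rw [ν.apply_eq_posPart_real_sub_negPart_real
    (MeasurableSet.univ_pi fun _ => measurableSet_Iio)]
  exact (tendsto_integral_prod_slope_max _ x).sub (tendsto_integral_prod_slope_max _ x)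

end Slope

section Orthants

variable {κ : Type*} [Fintype κ]

lemma MeasureTheory.Measure.ext_of_pi_Iio {P Q : Measure (κ → ℝ)} [IsFiniteMeasure P]
    [IsFiniteMeasure Q]
    (hPQ : ∀ x : κ → ℝ, P (pi univ fun k => Iio (x k)) = Q (pi univ fun k => Iio (x k))) :
    P = Q := by
  have hspan : IsCountablySpanning (range (Iio : ℝ → Set ℝ)) :=
    ⟨fun n => Iio (n : ℝ), fun n => mem_range_self _,
      iUnion_eq_univ_iff.mpr exists_nat_gt⟩
  have hgen : MeasurableSpace.generateFrom (range (Iio : ℝ → Set ℝ)) = (inferInstance : MeasurableSpace ℝ) :=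
    (BorelSpace.measurable_eq.trans (borel_eq_generateFrom_Iio ℝ)).symm
  refine Measure.ext_of_generateFrom_of_iUnion _ (fun n => pi univ fun _ => Iio (n : ℝ))
    (generateFrom_eq_pi (fun _ => hgen) fun _ => hspan).symm
    (IsPiSystem.pi fun _ => isPiSystem_Iio) ?_ (fun n => ⟨_, fun _ _ => mem_range_self _, rfl⟩)
    (fun _ => measure_ne_top _ _) ?_
  · refine iUnion_eq_univ_iff.mpr fun t => ?_
    obtain ⟨n, hn⟩ := exists_nat_gt (∑ k, |t k|)
    refine ⟨n, fun k _ => lt_of_le_of_lt ?_ hn⟩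
    exact (le_abs_self _).trans (Finset.single_le_sum (fun i _ => abs_nonneg (t i))
      (Finset.mem_univ k))
  · rintro _ ⟨f, hf, rfl⟩
    choose x hx using fun k => hf k (mem_univ k)
    obtain rfl : f = fun k => Iio (x k) := funext fun k => (hx k).symm
    exact hPQ x

lemma MeasureTheory.Measure.ext_of_pi_Iio_of_cube {P Q : Measure (κ → ℝ)} [IsFiniteMeasure P]
    [IsFiniteMeasure Q] (hP : P {t | ∀ k, 0 ≤ t k ∧ t k < 1}ᶜ = 0)
    (hQ : Q {t | ∀ k, 0 ≤ t k ∧ t k < 1}ᶜ = 0)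
    (hPQ : ∀ x : κ → ℝ, (∀ k, x k ∈ Set.Ioc 0 1) →
      P (pi univ fun k => Iio (x k)) = Q (pi univ fun k => Iio (x k))) :
    P = Q := by
  refine Measure.ext_of_pi_Iio fun x => ?_
  by_cases hx : ∀ k, 0 < x k
  · have hcut : (pi univ fun k => Iio (x k)) ∩ {t | ∀ k, 0 ≤ t k ∧ t k < 1} =
        (pi univ fun k => Iio (min (x k) 1)) ∩ {t | ∀ k, 0 ≤ t k ∧ t k < 1} := by
      ext t
      simp only [mem_inter_iff, mem_univ_pi, Set.mem_Iio, lt_min_iff, Set.mem_ofPred_eq]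
      exact ⟨fun h => ⟨fun k => ⟨h.1 k, (h.2 k).2⟩, h.2⟩, fun h => ⟨fun k => (h.1 k).1, h.2⟩⟩
    rw [← measure_inter_conull hP, ← measure_inter_conull hQ, hcut, measure_inter_conull hP,
      measure_inter_conull hQ]
    exact hPQ _ fun k => ⟨lt_min (hx k) one_pos, min_le_right _ _⟩
  · obtain ⟨k, hk⟩ := not_forall.mp hx
    have hnull : (pi univ fun k => Iio (x k)) ⊆ {t | ∀ k, 0 ≤ t k ∧ t k < 1}ᶜ :=
      fun t ht hC => hk (((hC k).1.trans_lt (ht k (mem_univ k))))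
    rw [measure_mono_null hnull hP, measure_mono_null hnull hQ]

lemma MeasureTheory.SignedMeasure.ext_of_pi_Iio_of_cube {ν ν' : SignedMeasure (κ → ℝ)}
    (hν : ν.totalVariation {t | ∀ k, 0 ≤ t k ∧ t k < 1}ᶜ = 0)
    (hν' : ν'.totalVariation {t | ∀ k, 0 ≤ t k ∧ t k < 1}ᶜ = 0)
    (hνν' : ∀ x : κ → ℝ, (∀ k, x k ∈ Set.Ioc 0 1) →
      ν (pi univ fun k => Iio (x k)) = ν' (pi univ fun k => Iio (x k))) :
    ν = ν' := by
  have hnull : ∀ μ : SignedMeasure (κ → ℝ), μ.totalVariation {t | ∀ k, 0 ≤ t k ∧ t k < 1}ᶜ = 0 →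
      μ.toJordanDecomposition.posPart {t | ∀ k, 0 ≤ t k ∧ t k < 1}ᶜ = 0 ∧
      μ.toJordanDecomposition.negPart {t | ∀ k, 0 ≤ t k ∧ t k < 1}ᶜ = 0 := fun μ hμ =>
    ⟨Measure.absolutelyContinuous_of_le μ.posPart_le_totalVariation hμ,
      Measure.absolutelyContinuous_of_le μ.negPart_le_totalVariation hμ⟩
  have hJordan := Measure.ext_of_pi_Iio_of_cube
    (by rw [Measure.add_apply, (hnull ν hν).1, (hnull ν' hν').2, add_zero])
    (by rw [Measure.add_apply, (hnull ν' hν').1, (hnull ν hν).2, add_zero])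
    fun x hx => (eq_iff_posPart_add_negPart_apply_eq
      (MeasurableSet.univ_pi fun _ => measurableSet_Iio)).mp (hνν' x hx)
  exact VectorMeasure.ext fun A hA => (eq_iff_posPart_add_negPart_apply_eq hA).mpr (by rw [hJordan])

end Orthants

lemma eventually_box_subset_Icc {ι : Type*} [DecidableEq ι] {S : Finset ι} {x : ι → ℝ}
    (hx : ∀ k, x k ∈ Set.Icc 0 1) (hS : ∀ k ∈ S, 0 < x k) :
    ∀ᶠ h in 𝓝[<] 0, ∀ T ⊆ S, ∀ k, (x k + if k ∈ T then h else 0) ∈ Set.Icc 0 1 := by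
  have hsmall : ∀ᶠ h in 𝓝[<] (0 : ℝ), ∀ k ∈ S, -x k < h :=
    (eventually_all_finset S).mpr fun k hk =>
      Filter.mem_of_superset (Ioo_mem_nhdsLT (neg_lt_zero.mpr (hS k hk))) fun _ hh => hh.1
  filter_upwards [hsmall, self_mem_nhdsWithin] with h hsmall (hneg : h < 0) T hT k
  split_ifs with hkT
  · exact ⟨by linarith [hsmall k (hT hkT)], by linarith [(hx k).2]⟩
  · simpa using hx k

lemma integrable_prod_max {κ : Type*} [Fintype κ] {μ : Measure (κ → ℝ)} [IsFiniteMeasure μ]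
    (hμ : ∀ᵐ t ∂μ, ∀ k, 0 ≤ t k) (y : κ → ℝ) :
    Integrable (fun t => ∏ k, max (y k - t k) 0) μ := by
  refine Integrable.mono' (integrable_const (∏ k, |y k|))
    (Continuous.aestronglyMeasurable (by fun_prop)) ?_
  filter_upwards [hμ] with t ht
  rw [Real.norm_eq_abs, Finset.abs_prod]
  refine Finset.prod_le_prod (fun _ _ => abs_nonneg _) fun k _ => ?_
  rw [abs_of_nonneg (le_max_right _ _)]
  exact max_le (by linarith [ht k, le_abs_self (y k)]) (abs_nonneg _)

namespace MarsRep

variable {d : ℕ} (R : MarsRep d)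

lemma ae_mem_cube (S : Finset (Fin d)) :
    ∀ᵐ t ∂(R.ν S).totalVariation, ∀ j, 0 ≤ t j ∧ t j < 1 :=
  ae_iff.mpr (R.conc S)

lemma sIntegral_prod_max_eq_zero {S : Finset (Fin d)} {y : Fin d → ℝ} {i : Fin d} (hi : i ∈ S)
    (hy : y i ≤ 0) : sIntegral (R.ν S) (fun t => ∏ j : S, max (y j - t j) 0) = 0 := by
  refine sIntegral_eq_zero_of_ae _ ?_
  filter_upwards [R.ae_mem_cube S] with t ht
  exact Finset.prod_eq_zero (mem_univ ⟨i, hi⟩) (max_eq_right (by linarith [(ht ⟨i, hi⟩).1]))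

lemma marsFun_zero : marsFun R 0 = R.a0 := by
  refine add_eq_left.mpr (Finset.sum_eq_zero fun S _ => ?_)
  split_ifs with hS
  · exact R.sIntegral_prod_max_eq_zero hS.choose_spec le_rfl
  · rfl

lemma boxDiff_marsFun {S : Finset (Fin d)} (hS : S.Nonempty) {X : Fin d → ℝ}
    (hX : ∀ j ∉ S, X j = 0) (h : ℝ) :
    boxDiff (marsFun R) S h X =
      sIntegral (R.ν S) fun t => ∏ j : S, (max (X j + h - t j) 0 - max (X j - t j) 0) := by
  rw [show marsFun R = fun y => R.a0 + _ from rfl, boxDiff_const_add hS, boxDiff_sum,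
    Finset.sum_eq_single S ?_ (by simp)]
  · simp only [if_pos hS]
    have hint : ∀ y : Fin d → ℝ,
        Integrable (fun t : S → ℝ => ∏ j : S, max (y j - t j) 0) (R.ν S).totalVariation :=
      fun y => integrable_prod_max ((R.ae_mem_cube S).mono fun _ ht j => (ht j).1) _
    rw [boxDiff_sIntegral _ hint]
    congr 1
    funext t
    set t' : Fin d → ℝ := fun i => if hi : i ∈ S then t ⟨i, hi⟩ else 0
    have hprod : ∀ g : Fin d → ℝ → ℝ, ∏ j : S, g j (t j) = ∏ j ∈ S, g j (t' j) := fun g => by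
      rw [← Finset.prod_coe_sort S fun j => g j (t' j)]
      exact Finset.prod_congr rfl fun j _ => by simp [t', j.2]
    rw [hprod fun j s => max (X j + h - s) 0 - max (X j - s) 0, ← boxDiff_prod (fun j s => max (s - t' j) 0)]
    congr 1
    funext y
    exact hprod fun j s => max (y j - s) 0
  · intro S' _ hS'S
    by_cases hSS' : S ⊆ S'
    · obtain ⟨i, hiS', hiS⟩ := Finset.exists_of_ssubset (hSS'.ssubset_of_ne (Ne.symm hS'S))
      rw [boxDiff_congr (g := fun _ => 0) fun T hT => ?_]
      · simp [boxDiff]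
      · have hiT : i ∉ T := fun hiT => hiS (hT hiT)
        rw [if_pos ⟨i, hiS'⟩]
        exact R.sIntegral_prod_max_eq_zero (y := fun j => X j + if j ∈ T then h else 0) hiS'
          (by simp [hX i hiS, hiT])
    · obtain ⟨a, haS, haS'⟩ := Finset.not_subset.mp hSS'
      refine boxDiff_eq_zero_of_update_eq haS fun y s => ?_
      have hupdate : ∀ j : S', Function.update y a s j = y j :=
        fun j => Function.update_of_ne (ne_of_mem_of_not_mem j.2 haS') _ _
      simp only [hupdate]

lemma tendsto_boxDiff_marsFun_div {S : Finset (Fin d)}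
    (hS : S.Nonempty) {X : Fin d → ℝ} (hX : ∀ j ∉ S, X j = 0) :
    Tendsto (fun h => boxDiff (marsFun R) S h X / h ^ #S) (𝓝[<] 0)
      (𝓝 (R.ν S (pi univ fun j : S => Iio (X j)))) := by
  refine (tendsto_sIntegral_prod_slope_max (R.ν S) fun j : S => X j).congr fun h => ?_
  rw [R.boxDiff_marsFun hS hX, ← sIntegral_div_const]
  simp only [Finset.prod_div_distrib, Finset.prod_const, Finset.card_univ, Fintype.card_coe]

end MarsRep

theorem statement12_general (d : ℕ) (R R' : MarsRep d)
    (h : ∀ x : Fin d → ℝ, (∀ k, x k ∈ Set.Icc (0 : ℝ) 1) →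
      marsFun R x = marsFun R' x) :
    R.a0 = R'.a0 ∧ ∀ S : Finset (Fin d), S.Nonempty → R.ν S = R'.ν S := by
  refine ⟨by simpa only [MarsRep.marsFun_zero] using h 0 fun _ => ⟨le_rfl, zero_le_one⟩,
    fun S hS => SignedMeasure.ext_of_pi_Iio_of_cube (R.conc S) (R'.conc S) fun x hx => ?_⟩
  set X : Fin d → ℝ := fun i => if hi : i ∈ S then x ⟨i, hi⟩ else 0
  have hXx : (fun j : S => X j) = x := funext fun j => dif_pos j.2
  have hX : ∀ j ∉ S, X j = 0 := fun j hj => dif_neg hj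
  have hXcube : ∀ k, X k ∈ Set.Icc 0 1 := fun k => by
    by_cases hk : k ∈ S
    · simpa [X, hk] using Set.Ioc_subset_Icc_self (hx ⟨k, hk⟩)
    · simp [hX k hk]
  have hXpos : ∀ k ∈ S, 0 < X k := fun k hk => by simpa [X, hk] using (hx ⟨k, hk⟩).1
  rw [← hXx]
  refine tendsto_nhds_unique (R.tendsto_boxDiff_marsFun_div hS hX)
    ((R'.tendsto_boxDiff_marsFun_div hS hX).congr' ?_)
  filter_upwards [eventually_box_subset_Icc hXcube hXpos] with s hs
  rw [boxDiff_congr fun T hT => (h _ (hs T hT)).symm]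

/-- Uniqueness of MARS representations: if two representations define
the same function on `[0,1]^d`, their constants agree and their signed measures agree
for every nonempty `S`. -/
theorem statement12 (d : ℕ) (hd : 1 ≤ d) (R R' : MarsRep d)
    (h : ∀ x : Fin d → ℝ, (∀ k, x k ∈ Set.Icc (0 : ℝ) 1) →
      marsFun R x = marsFun R' x) :
    R.a0 = R'.a0 ∧ ∀ S : Finset (Fin d), S.Nonempty → R.ν S = R'.ν S :=
  statement12_general d R R' h
end

section
/- Fix integers d ≥ 1 and n₁,…,n_d ≥ 2. For every θ : I₀ → ℝ and every i ∈ I₀, one has θ_i = (H^(2)θ)_0 + Σ_{α∈{0,1}^d, α≠0} Σ_{l∈I₀^(α), l≤i coordinatewise} (∏_{k=1}^d binom(i_k − l_k + α_k, α_k)) · (H^(2)θ)_l, where binom denotes the binomial coefficient (so the factor equals ∏_{k: α_k=1}(i_k − l_k + 1)). -/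
open Finset MeasureTheory

/-- The discrete mixed difference `(D^(β)θ)_i` (with `ℕ`-valued multi-indices). -/
noncomputable def mixedDiff (d : ℕ) (β : Fin d → ℕ) (θ : (Fin d → ℕ) → ℝ)
    (i : Fin d → ℕ) : ℝ :=
  ∑ δ ∈ Fintype.piFinset (fun k => Finset.range (β k + 1)),
    (-1 : ℝ) ^ (∑ k, δ k) * (∏ k, ((β k).choose (δ k) : ℝ)) * θ (fun k => i k - δ k)

/-- The index set `I₀^(β)`. -/
def idxBeta (d : ℕ) (n β : Fin d → ℕ) : Finset (Fin d → ℕ) :=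
  Fintype.piFinset fun k =>
    if β k = Finset.univ.sup β then Finset.Ico (Finset.univ.sup β) (n k)
    else {β k}

/-- The complexity measure `V₂(θ)`. -/
noncomputable def V2 (d : ℕ) (n : Fin d → ℕ) (θ : (Fin d → ℕ) → ℝ) : ℝ :=
  ∑ β ∈ (Fintype.piFinset fun _ : Fin d => Finset.range 3).filter
      (fun β => Finset.univ.sup β = 2),
    (∏ k, (n k : ℝ) ^ (if β k = 2 then 1 else β k)) *
      ∑ i ∈ idxBeta d n β, |mixedDiff d β θ i|

/-- Extension of a vector indexed by `I₀ = Π_k {0,…,n_k-1}` to all of `ℕ^d` (by `0`). -/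
noncomputable def latExtend (d : ℕ) (n : Fin d → ℕ)
    (θ : (∀ k : Fin d, Fin (n k)) → ℝ) : (Fin d → ℕ) → ℝ :=
  fun j => if h : ∀ k, j k < n k then θ (fun k => ⟨j k, h k⟩) else 0

/-- The constraint set `C(V) = {θ : V₂(θ) ≤ V}`. -/
def Cset (d : ℕ) (n : Fin d → ℕ) (V : ℝ) : Set ((∀ k : Fin d, Fin (n k)) → ℝ) :=
  { θ | V2 d n (latExtend d n θ) ≤ V }

/-- The product Gaussian measure on `ℝ^{I₀}` with i.i.d. `N(0, σ²)` coordinates. -/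
noncomputable def gaussPi (d : ℕ) (n : Fin d → ℕ) (σ : ℝ) :
    Measure ((∀ k : Fin d, Fin (n k)) → ℝ) :=
  Measure.pi fun _ => ProbabilityTheory.gaussianReal 0 ⟨σ ^ 2, sq_nonneg σ⟩

/-- The operator `H^(2)`: `(H^(2)θ)_i = (D^(β)θ)_i` where `β_k = min(i_k, 2)`
(this uniformly covers both cases of the definition). -/
noncomputable def H2 (d : ℕ) (θ : (Fin d → ℕ) → ℝ) (i : Fin d → ℕ) : ℝ :=
  mixedDiff d (fun k => min (i k) 2) θ i

/-!
Write the right-hand side as one box sum `Σ_{l ≤ i} w(i,l) (H^(2)θ)_l` with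
`w(i,l) = ∏_k binom(i_k - l_k + α_k, α_k)`, `α = min l 1`; grouping the `l ≠ 0` by `α` gives
back the sets `I₀^(α)`. Expanding each `(H^(2)θ)_l` as a mixed difference, the coefficient of
`θ_m` in the box sum factors over the coordinates, and in one dimension it is `1` for `m = i`
and `0` otherwise: for `l ≥ 2` the weights `i - l + 1` are affine in `l`, so the second
differences annihilate them except at the ends of the range.
-/

/-- The coefficient of `θ_{l-δ}` in the weighted term `binom(i - l + α, α) (H^(2)θ)_l`,
`α = min l 1`, of the one-dimensional inversion formula. -/
noncomputable def inversionKernel (i l δ : ℕ) : ℝ :=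
  ((i - l + min l 1).choose (min l 1) : ℝ) * (-1 : ℝ) ^ δ * ((min l 2).choose δ : ℝ)

lemma sum_inversionKernel_eq_ite {i m : ℕ} (hm : m ≤ i) :
    ∑ δ ∈ (range 3).filter (fun δ => m + δ ≤ i), inversionKernel i (m + δ) δ
      = if m = i then 1 else 0 := by
  rw [sum_filter, sum_range_succ, sum_range_succ, sum_range_one]
  obtain ⟨r, rfl⟩ := Nat.exists_eq_add_of_le hm
  unfold inversionKernel
  match r, m with
  | 0, 0 => norm_num
  | 0, m + 1 => simp
  | 1, 0 => norm_num
  | 1, m + 1 => simp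
  | r + 2, 0 => simp
  | r + 2, m + 1 => simp; ring

variable {d : ℕ}

lemma prod_choose_mul_H2_eq_sum (θ : (Fin d → ℕ) → ℝ) (i l : Fin d → ℕ) :
    (∏ k, ((i k - l k + min (l k) 1).choose (min (l k) 1) : ℝ)) * H2 d θ l
      = ∑ δ ∈ Fintype.piFinset (fun k => range (min (l k) 2 + 1)),
          (∏ k, inversionKernel (i k) (l k) (δ k)) * θ (fun k => l k - δ k) := by
  rw [H2, mixedDiff, mul_sum]
  refine sum_congr rfl fun δ _ => ?_
  simp only [inversionKernel, prod_mul_distrib, ← prod_pow_eq_pow_sum]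
  ring

lemma sum_box_sum_eq_sum_box_sum_add {M : Type*} [AddCommMonoid M] (i : Fin d → ℕ)
    (f : (Fin d → ℕ) → (Fin d → ℕ) → M) :
    ∑ l ∈ Fintype.piFinset (fun k => range (i k + 1)),
        ∑ δ ∈ Fintype.piFinset (fun k => range (min (l k) 2 + 1)), f l δ
      = ∑ m ∈ Fintype.piFinset (fun k => range (i k + 1)),
          ∑ δ ∈ Fintype.piFinset (fun k => (range 3).filter (fun δ => m k + δ ≤ i k)),
            f (m + δ) δ := by
  rw [sum_sigma', sum_sigma']
  refine sum_nbij' (fun p => ⟨p.1 - p.2, p.2⟩) (fun p => ⟨p.1 + p.2, p.2⟩) ?_ ?_ ?_ ?_ ?_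
  all_goals
    rintro ⟨l, δ⟩ h
    simp only [mem_sigma, Fintype.mem_piFinset, mem_range, mem_filter] at h
  · simp only [mem_sigma, Fintype.mem_piFinset, mem_range, mem_filter, Pi.sub_apply]
    exact ⟨fun k => by grind, fun k => by grind⟩
  · simp only [mem_sigma, Fintype.mem_piFinset, mem_range, Pi.add_apply]
    exact ⟨fun k => by grind, fun k => by grind⟩
  · simp only [Sigma.mk.injEq, heq_eq_eq, and_true]
    exact funext fun k => by simp only [Pi.add_apply, Pi.sub_apply]; grind
  · simp only [Sigma.mk.injEq, heq_eq_eq, and_true]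
    exact funext fun k => by simp
  · congr
    exact funext fun k => by simp only [Pi.add_apply, Pi.sub_apply]; grind

lemma sum_prod_choose_mul_H2 (θ : (Fin d → ℕ) → ℝ) (i : Fin d → ℕ) :
    ∑ l ∈ Fintype.piFinset (fun k => range (i k + 1)),
      (∏ k, ((i k - l k + min (l k) 1).choose (min (l k) 1) : ℝ)) * H2 d θ l = θ i := by
  have kernel_sum (m : Fin d → ℕ) (hm : m ∈ Fintype.piFinset fun k => range (i k + 1)) :
      ∑ δ ∈ Fintype.piFinset (fun k => (range 3).filter (fun δ => m k + δ ≤ i k)),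
        (∏ k, inversionKernel (i k) ((m + δ) k) (δ k)) * θ (fun k => (m + δ) k - δ k)
        = if m = i then θ m else 0 := by
    simp only [Pi.add_apply, Nat.add_sub_cancel, ← sum_mul]
    rw [← prod_univ_sum (fun k => (range 3).filter (fun δ => m k + δ ≤ i k))
      (fun k δ => inversionKernel (i k) (m k + δ) δ)]
    simp only [Fintype.mem_piFinset, mem_range, Nat.lt_succ_iff] at hm
    simp only [sum_inversionKernel_eq_ite (hm _), prod_boole, mem_univ, forall_const, ite_mul,
      one_mul, zero_mul]
    exact if_congr funext_iff.symm rfl rfl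
  simp only [prod_choose_mul_H2_eq_sum, sum_box_sum_eq_sum_box_sum_add]
  rw [sum_congr rfl kernel_sum, sum_ite_eq']
  simp

lemma mem_idxBeta_iff_of_binary {n α l : Fin d → ℕ}
    (hα : α ∈ (Fintype.piFinset fun _ : Fin d => range 2).filter (fun α => α ≠ fun _ => 0))
    (hl : ∀ k, l k < n k) :
    l ∈ idxBeta d n α ↔ (fun k => min (l k) 1) = α := by
  simp only [mem_filter, Fintype.mem_piFinset, mem_range, ne_eq, funext_iff, not_forall] at hα
  obtain ⟨hα_le, k₀, hk₀⟩ := hα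
  have hsup : univ.sup α = 1 :=
    le_antisymm (Finset.sup_le fun k _ => by grind) (le_sup_of_le (mem_univ k₀) (by grind))
  simp only [idxBeta, hsup, Fintype.mem_piFinset, funext_iff]
  refine forall_congr' fun k => ?_
  split_ifs <;> grind

lemma filter_erase_box_eq_filter_idxBeta {n α i : Fin d → ℕ}
    (hα : α ∈ (Fintype.piFinset fun _ : Fin d => range 2).filter (fun α => α ≠ fun _ => 0))
    (hi : ∀ k, i k < n k) :
    (((Fintype.piFinset fun k => range (i k + 1)).erase fun _ => 0).filter
        fun l => (fun k => min (l k) 1) = α)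
      = (idxBeta d n α).filter (fun l => ∀ k, l k ≤ i k) := by
  ext l
  simp only [mem_filter, mem_erase, Fintype.mem_piFinset, mem_range, Nat.lt_succ_iff]
  constructor
  · rintro ⟨⟨-, hli⟩, rfl⟩
    exact ⟨(mem_idxBeta_iff_of_binary hα fun k => (hli k).trans_lt (hi k)).2 rfl, hli⟩
  · rintro ⟨hl, hli⟩
    have hα_eq := (mem_idxBeta_iff_of_binary hα fun k => (hli k).trans_lt (hi k)).1 hl
    refine ⟨⟨?_, hli⟩, hα_eq⟩
    rintro rfl
    subst hα_eq
    simp at hα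

theorem statement18_general (d : ℕ) (n : Fin d → ℕ)
    (θ : (Fin d → ℕ) → ℝ) (i : Fin d → ℕ) (hi : ∀ k, i k < n k) :
    θ i = H2 d θ (fun _ => 0) +
      ∑ α ∈ (Fintype.piFinset fun _ : Fin d => Finset.range 2).filter
          (fun α => α ≠ fun _ => 0),
        ∑ l ∈ (idxBeta d n α).filter (fun l => ∀ k, l k ≤ i k),
          (∏ k, ((i k - l k + α k).choose (α k) : ℝ)) * H2 d θ l := by
  have hzero : (fun _ => 0) ∈ Fintype.piFinset fun k => range (i k + 1) := by simp
  rw [← sum_prod_choose_mul_H2 θ i, ← add_sum_erase _ _ hzero]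
  congr 1
  · simp
  rw [← sum_fiberwise_of_maps_to (g := fun l k => min (l k) 1)
    (t := (Fintype.piFinset fun _ : Fin d => range 2).filter (fun α => α ≠ fun _ => 0))
    (fun l hl => by
      simp only [mem_erase, Fintype.mem_piFinset, mem_range, mem_filter, ne_eq, funext_iff,
        not_forall] at hl ⊢
      grind)]
  refine sum_congr rfl fun α hα => ?_
  rw [← filter_erase_box_eq_filter_idxBeta hα hi]
  refine sum_congr rfl fun l hl => ?_
  obtain ⟨-, rfl⟩ := mem_filter.mp hl
  rfl

/-- The inversion identity recovering `θ` from its second-order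
mixed differences `H^(2)θ`:
`θ_i = (H^(2)θ)_0 + Σ_{α ≠ 0} Σ_{l ∈ I₀^(α), l ≤ i} Π_k C(i_k - l_k + α_k, α_k) (H^(2)θ)_l`. -/
theorem statement18 (d : ℕ) (hd : 1 ≤ d) (n : Fin d → ℕ) (hn : ∀ k, 2 ≤ n k)
    (θ : (Fin d → ℕ) → ℝ) (i : Fin d → ℕ) (hi : ∀ k, i k < n k) :
    θ i = H2 d θ (fun _ => 0) +
      ∑ α ∈ (Fintype.piFinset fun _ : Fin d => Finset.range 2).filter
          (fun α => α ≠ fun _ => 0),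
        ∑ l ∈ (idxBeta d n α).filter (fun l => ∀ k, l k ≤ i k),
          (∏ k, ((i k - l k + α k).choose (α k) : ℝ)) * H2 d θ l :=
  statement18_general d n θ i hi
end

section
/- For every integer m ≥ 1 there exists a constant c_m > 0 depending only on m such that for all positive integers a₁,…,a_m and all β, β' ∈ ℝ^I, the functions G_β, G_{β'} : [0,1]^m → ℝ defined by G_β(x) = Σ_{j∈I} β_j · ∏_{k=1}^m max(x_k − (j_k − 1)/a_k, 0) satisfy (∫_{[0,1]^m} (G_β − G_{β'})²)^{1/2} ≥ c_m · (a₁⋯a_m)^{−3/2} · ‖(L_I)²β − (L_I)²β'‖₂, where the integral is with respect to Lebesgue measure and ‖·‖₂ is the Euclidean norm on ℝ^I. -/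
open Finset MeasureTheory

/-- The unit cube `[0,1]^m`. -/
def marsCube (m : ℕ) : Set (Fin m → ℝ) := Set.univ.pi fun _ => Set.Icc 0 1

/-- The map `(L_I)²` : `((L_I)²β)_i = Σ_{j ≤ i} (Π_k (i_k - j_k + 1)) β_j`. -/
noncomputable def Lsq (m : ℕ) (a : Fin m → ℕ)
    (β : (∀ k, Fin (a k)) → ℝ) : (∀ k, Fin (a k)) → ℝ :=
  fun i => ∑ j : ∀ k, Fin (a k),
    (if ∀ k, (j k : ℕ) ≤ (i k : ℕ) then
        ∏ k, (((i k : ℕ) : ℝ) - ((j k : ℕ) : ℝ) + 1)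
      else 0) * β j

/-- The piecewise-polynomial function
`G_β(x) = Σ_{j∈I} β_j Π_k (x_k - (j_k - 1)/a_k)₊` (with `j` in `Π_k {1,…,a_k}`,
represented by `0`-based indices). -/
noncomputable def Gfun (m : ℕ) (a : Fin m → ℕ)
    (β : (∀ k, Fin (a k)) → ℝ) (x : Fin m → ℝ) : ℝ :=
  ∑ j : ∀ k, Fin (a k), β j * ∏ k, max (x k - ((j k : ℕ) : ℝ) / (a k : ℝ)) 0

/-!
On the grid cell `C_i = ∏_k [i_k/a_k, (i_k+1)/a_k]` only the knots `j ≤ i` of `G_β` are active, so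
`G_β` is a multi-affine polynomial there, and its value at the upper corner of `C_i` is
`((L_I)²β)_i / ∏_k a_k`. For an affine `f` on `[l, u]` one has `∫ f² ≥ (u - l)/4 · f(u)²`, and
Fubini iterates this to multi-affine functions on boxes. Summing over the disjoint cells gives
`∫_{[0,1]^m} G_β² ≥ 4^{-m} (∏_k a_k)^{-3} Σ_i ((L_I)²β)_i²`, and both `G` and `(L_I)²` are linear
in `β`; hence `c_m = 2^{-m}`.
-/

lemma quarter_mul_sq_le_setIntegral_sq_affine {p q l u : ℝ} (h : l ≤ u) :
    (u - l) / 4 * (p + q * u) ^ 2 ≤ ∫ t in Set.Icc l u, (p + q * t) ^ 2 := by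
  have hint : ∫ t in l..u, (p + q * t) ^ 2 =
      (u - l) * (p ^ 2 + p * q * (u + l) + q ^ 2 * (u ^ 2 + u * l + l ^ 2) / 3) := by
    have hi : ∀ f : ℝ → ℝ, Continuous f → IntervalIntegrable f volume l u :=
      fun f hf => hf.intervalIntegrable l u
    simp only [show ∀ t, (p + q * t) ^ 2 = p ^ 2 + 2 * p * q * t + q ^ 2 * t ^ 2 from
      fun t => by ring]
    rw [intervalIntegral.integral_add (hi _ (by fun_prop)) (hi _ (by fun_prop)),
      intervalIntegral.integral_add (hi _ (by fun_prop)) (hi _ (by fun_prop)),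
      intervalIntegral.integral_const_mul, intervalIntegral.integral_const_mul]
    simp
    ring
  rw [integral_Icc_eq_integral_Ioc, ← intervalIntegral.integral_of_le h, hint]
  -- the difference of the two sides is `(u - l) (3p + 2ql + qu)² / 12`
  nlinarith [mul_nonneg (sub_nonneg.2 h) (sq_nonneg (3 * p + 2 * q * l + q * u))]

lemma setIntegral_Icc_eq_setIntegral_Icc_cons {m : ℕ} {f : (Fin (m + 1) → ℝ) → ℝ}
    (hf : Continuous f) (l u : Fin (m + 1) → ℝ) :
    ∫ x in Set.Icc l u, f x =
      ∫ t in Set.Icc (l 0) (u 0), ∫ y in Set.Icc (Fin.tail l) (Fin.tail u), f (Fin.cons t y) := by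
  set e : ℝ × (Fin m → ℝ) ≃ᵐ (Fin (m + 1) → ℝ) :=
    (MeasurableEquiv.piFinSuccAbove (fun _ => ℝ) 0).symm
  have hem : MeasurePreserving e :=
    (volume_preserving_piFinSuccAbove (fun _ : Fin (m + 1) => ℝ) 0).symm _
  have hpre : e ⁻¹' Set.Icc l u = Set.Icc (l 0) (u 0) ×ˢ Set.Icc (Fin.tail l) (Fin.tail u) :=
    ((Fin.insertNthOrderIso (fun _ => ℝ) 0).preimage_Icc _ _).trans (Set.Icc_prod_eq _ _)
  have he : ⇑e = fun z => Fin.cons z.1 z.2 := by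
    ext z : 1
    simp [e, MeasurableEquiv.piFinSuccAbove_symm_apply, Fin.insertNthEquiv, Fin.insertNth_zero']
  rw [← hem.map_eq, setIntegral_map_equiv, hpre, Measure.volume_eq_prod, setIntegral_prod, he]
  rw [← Measure.volume_eq_prod, he]
  exact (hf.comp (continuous_fst.finCons continuous_snd)).continuousOn.integrableOn_compact
    (isCompact_Icc.prod isCompact_Icc)

lemma prod_quarter_mul_sq_le_setIntegral_sq_multiaffine {ι : Type*} [Fintype ι] :
    ∀ {m : ℕ} (c : ι → ℝ) (b : ι → Fin m → ℝ) {l u : Fin m → ℝ}, l ≤ u →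
      (∏ k, (u k - l k) / 4) * (∑ j, c j * ∏ k, (u k - b j k)) ^ 2 ≤
        ∫ x in Set.Icc l u, (∑ j, c j * ∏ k, (x k - b j k)) ^ 2
  | 0, c, b, l, u, _ => by
    have : Set.Icc l u = Set.univ := Set.eq_univ_of_forall fun x => ⟨(·.elim0), (·.elim0)⟩
    simp [this, volume_pi, measureReal_def]
  | m + 1, c, b, l, u, hlu => by
    set K := ∏ k : Fin m, (u k.succ - l k.succ) / 4
    set w : ι → ℝ := fun j => ∏ k : Fin m, (u k.succ - b j k.succ)
    set g : ℝ → ℝ := fun t => ∑ j, c j * (t - b j 0) * w j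
    have hK : 0 ≤ K := prod_nonneg fun k _ => div_nonneg (sub_nonneg.2 (hlu k.succ)) zero_le_four
    have hg : ∀ t, g t = -∑ j, c j * b j 0 * w j + (∑ j, c j * w j) * t := fun t => by
      rw [sum_mul, neg_add_eq_sub, ← sum_sub_distrib]
      exact sum_congr rfl fun j _ => by ring
    have slice : ∀ t, K * g t ^ 2 ≤ ∫ y in Set.Icc (Fin.tail l) (Fin.tail u),
        (∑ j, c j * ∏ k, ((Fin.cons t y : Fin (m + 1) → ℝ) k - b j k)) ^ 2 := fun t => by
      have h := prod_quarter_mul_sq_le_setIntegral_sq_multiaffine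
        (fun j => c j * (t - b j 0)) (fun j => Fin.tail (b j)) (fun k => hlu k.succ)
      simp only [Fin.tail, mul_assoc] at h
      simp only [Fin.prod_univ_succ, Fin.cons_zero, Fin.cons_succ, mul_assoc, g, w]
      exact h
    have hslice : Continuous fun t => ∫ y in Set.Icc (Fin.tail l) (Fin.tail u),
        (∑ j, c j * ∏ k, ((Fin.cons t y : Fin (m + 1) → ℝ) k - b j k)) ^ 2 :=
      continuous_parametric_integral_of_continuous (by fun_prop) isCompact_Icc
    rw [setIntegral_Icc_eq_setIntegral_Icc_cons (by fun_prop), Fin.prod_univ_succ]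
    simp only [Fin.prod_univ_succ (fun k => u k - _), ← mul_assoc]
    calc (u 0 - l 0) / 4 * K * g (u 0) ^ 2 = K * ((u 0 - l 0) / 4 * g (u 0) ^ 2) := by ring
      _ ≤ K * ∫ t in Set.Icc (l 0) (u 0), g t ^ 2 := by
        simp only [hg]
        exact mul_le_mul_of_nonneg_left (quarter_mul_sq_le_setIntegral_sq_affine (hlu 0)) hK
      _ = ∫ t in Set.Icc (l 0) (u 0), K * g t ^ 2 := (integral_const_mul _ _).symm
      _ ≤ _ := setIntegral_mono_on (Continuous.integrableOn_Icc (by fun_prop))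
        hslice.integrableOn_Icc measurableSet_Icc fun t _ => slice t

section Grid

variable {m : ℕ} {a : Fin m → ℕ}

lemma Lsq_sub (β β' : (∀ k, Fin (a k)) → ℝ) (i : ∀ k, Fin (a k)) :
    Lsq m a β i - Lsq m a β' i = Lsq m a (β - β') i := by
  simp only [Lsq, ← sum_sub_distrib, Pi.sub_apply, mul_sub]

lemma Gfun_sub (β β' : (∀ k, Fin (a k)) → ℝ) (x : Fin m → ℝ) :
    Gfun m a β x - Gfun m a β' x = Gfun m a (β - β') x := by
  simp only [Gfun, ← sum_sub_distrib, Pi.sub_apply, sub_mul]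

variable (a) in
noncomputable def lowerCorner (i : ∀ k, Fin (a k)) (k : Fin m) : ℝ := ((i k : ℕ) : ℝ) / a k

variable (a) in
noncomputable def upperCorner (i : ∀ k, Fin (a k)) (k : Fin m) : ℝ := (((i k : ℕ) : ℝ) + 1) / a k

-- Half-open so that the cells are disjoint; `Set.univ.pi` rather than `Set.Ico` in the product
-- order, which would be empty for `m = 0`.
variable (a) in
def cell (i : ∀ k, Fin (a k)) : Set (Fin m → ℝ) :=
  Set.univ.pi fun k => Set.Ico (lowerCorner a i k) (upperCorner a i k)

lemma lowerCorner_le_upperCorner (i : ∀ k, Fin (a k)) : lowerCorner a i ≤ upperCorner a i :=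
  fun k => div_le_div_of_nonneg_right (by linarith) (Nat.cast_nonneg _)

lemma lowerCorner_le_lowerCorner {i j : ∀ k, Fin (a k)} {k : Fin m} (h : (j k : ℕ) ≤ i k) :
    lowerCorner a j k ≤ lowerCorner a i k :=
  div_le_div_of_nonneg_right (Nat.cast_le.2 h) (Nat.cast_nonneg _)

lemma upperCorner_le_lowerCorner {i j : ∀ k, Fin (a k)} {k : Fin m} (h : (i k : ℕ) < j k) :
    upperCorner a i k ≤ lowerCorner a j k :=
  div_le_div_of_nonneg_right (by exact_mod_cast h) (Nat.cast_nonneg _)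

lemma floor_mul_eq_of_mem_cell {i : ∀ k, Fin (a k)} {x : Fin m → ℝ} (hx : x ∈ cell a i)
    (k : Fin m) : ⌊x k * a k⌋₊ = i k := by
  have ha : (0 : ℝ) < a k := Nat.cast_pos.2 (i k).pos
  obtain ⟨hl, hu⟩ := hx k (Set.mem_univ k)
  rw [lowerCorner, div_le_iff₀ ha] at hl
  rw [upperCorner, lt_div_iff₀ ha] at hu
  exact (Nat.floor_eq_iff (hl.trans' (Nat.cast_nonneg _))).2 ⟨hl, hu⟩

lemma pairwise_disjoint_cell : Pairwise (Function.onFun Disjoint (cell a)) := by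
  intro i i' hne
  refine Set.disjoint_left.2 fun x hx hx' => hne (funext fun k => Fin.ext ?_)
  exact (floor_mul_eq_of_mem_cell hx k).symm.trans (floor_mul_eq_of_mem_cell hx' k)

lemma cell_subset_marsCube (i : ∀ k, Fin (a k)) : cell a i ⊆ marsCube m := by
  intro x hx k _
  obtain ⟨hl, hu⟩ := hx k (Set.mem_univ k)
  refine ⟨hl.trans' (by unfold lowerCorner; positivity), hu.le.trans ?_⟩
  exact div_le_one_of_le₀ (by exact_mod_cast (i k).isLt) (Nat.cast_nonneg _)

lemma Gfun_eq_of_mem_Icc (β : (∀ k, Fin (a k)) → ℝ) {i : ∀ k, Fin (a k)} {x : Fin m → ℝ}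
    (hx : x ∈ Set.Icc (lowerCorner a i) (upperCorner a i)) :
    Gfun m a β x = ∑ j, (if ∀ k, (j k : ℕ) ≤ i k then β j else 0) *
      ∏ k, (x k - lowerCorner a j k) := by
  refine sum_congr rfl fun j _ => ?_
  split_ifs with hji
  · exact congrArg _ <| prod_congr rfl fun k _ =>
      max_eq_left (sub_nonneg.2 ((lowerCorner_le_lowerCorner (hji k)).trans (hx.1 k)))
  · obtain ⟨k, hk⟩ := not_forall.1 hji
    rw [zero_mul, prod_eq_zero (mem_univ k), mul_zero]
    exact max_eq_right (sub_nonpos.2 ((hx.2 k).trans (upperCorner_le_lowerCorner (not_le.1 hk))))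

lemma sum_mul_prod_upperCorner_sub_lowerCorner (β : (∀ k, Fin (a k)) → ℝ) (i : ∀ k, Fin (a k)) :
    ∑ j, (if ∀ k, (j k : ℕ) ≤ i k then β j else 0) * ∏ k, (upperCorner a i k - lowerCorner a j k) =
      Lsq m a β i / ∏ k, (a k : ℝ) := by
  rw [Lsq, sum_div]
  refine sum_congr rfl fun j _ => ?_
  split_ifs
  · have hfac : ∀ k, upperCorner a i k - lowerCorner a j k =
        (((i k : ℕ) : ℝ) - (j k : ℕ) + 1) / a k := fun k => by
      rw [upperCorner, lowerCorner, ← sub_div]; ring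
    rw [prod_congr rfl fun k _ => hfac k, prod_div_distrib]
    ring
  · simp

lemma mul_sq_Lsq_le_setIntegral_cell_sq_Gfun (β : (∀ k, Fin (a k)) → ℝ) (i : ∀ k, Fin (a k)) :
    (∏ k, (a k : ℝ))⁻¹ ^ 3 / 4 ^ m * Lsq m a β i ^ 2 ≤ ∫ x in cell a i, Gfun m a β x ^ 2 := by
  have hcell : ∫ x in cell a i, Gfun m a β x ^ 2 =
      ∫ x in Set.Icc (lowerCorner a i) (upperCorner a i), Gfun m a β x ^ 2 := by
    rw [← Set.pi_univ_Icc, volume_pi]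
    exact setIntegral_congr_set Measure.pi_Ico_ae_eq_pi_Icc
  rw [hcell, setIntegral_congr_fun measurableSet_Icc fun x hx => by rw [Gfun_eq_of_mem_Icc β hx]]
  refine le_of_eq_of_le ?_ (prod_quarter_mul_sq_le_setIntegral_sq_multiaffine _ _
    (lowerCorner_le_upperCorner i))
  have hvol : ∏ k, (upperCorner a i k - lowerCorner a i k) / 4 = (∏ k, (a k : ℝ))⁻¹ / 4 ^ m := by
    simp only [upperCorner, lowerCorner, ← sub_div, add_sub_cancel_left, div_div, prod_div_distrib]
    simp [prod_mul_distrib, div_eq_inv_mul]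
  rw [sum_mul_prod_upperCorner_sub_lowerCorner, hvol]
  ring

lemma mul_sum_sq_Lsq_le_setIntegral_marsCube_sq_Gfun (β : (∀ k, Fin (a k)) → ℝ) :
    (∏ k, (a k : ℝ))⁻¹ ^ 3 / 4 ^ m * ∑ i, Lsq m a β i ^ 2 ≤
      ∫ x in marsCube m, Gfun m a β x ^ 2 := by
  have hint : IntegrableOn (fun x => Gfun m a β x ^ 2) (marsCube m) :=
    (Continuous.continuousOn (by unfold Gfun; fun_prop)).integrableOn_compact
      (isCompact_univ_pi fun _ => isCompact_Icc)
  have hcells :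
      ∑ i, ∫ x in cell a i, Gfun m a β x ^ 2 = ∫ x in ⋃ i, cell a i, Gfun m a β x ^ 2 := by
    rw [integral_iUnion (s := cell a) (fun i => MeasurableSet.univ_pi fun _ => measurableSet_Ico)
      pairwise_disjoint_cell (hint.mono_set (Set.iUnion_subset cell_subset_marsCube)),
      tsum_fintype]
  rw [mul_sum]
  calc ∑ i, (∏ k, (a k : ℝ))⁻¹ ^ 3 / 4 ^ m * Lsq m a β i ^ 2
      ≤ ∑ i, ∫ x in cell a i, Gfun m a β x ^ 2 :=
        sum_le_sum fun i _ => mul_sq_Lsq_le_setIntegral_cell_sq_Gfun β i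
    _ = ∫ x in ⋃ i, cell a i, Gfun m a β x ^ 2 := hcells
    _ ≤ ∫ x in marsCube m, Gfun m a β x ^ 2 :=
        setIntegral_mono_set hint (.of_forall fun _ => sq_nonneg _)
          (Set.iUnion_subset cell_subset_marsCube).eventuallyLE

end Grid

theorem statement19_general (m : ℕ) :
    ∃ c : ℝ, 0 < c ∧
      ∀ a : Fin m → ℕ, (∀ k, 1 ≤ a k) →
        ∀ β β' : (∀ k, Fin (a k)) → ℝ,
          c * (∏ k, (a k : ℝ)) ^ (-(3 : ℝ) / 2) *
              Real.sqrt (∑ i, (Lsq m a β i - Lsq m a β' i) ^ 2) ≤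
            Real.sqrt (∫ x in marsCube m, (Gfun m a β x - Gfun m a β' x) ^ 2) := by
  refine ⟨(1 / 2) ^ m, by positivity, fun a ha β β' => ?_⟩
  set P := ∏ k, (a k : ℝ)
  have hP : 0 < P := prod_pos fun k _ => Nat.cast_pos.2 (ha k)
  have hc : ((1 / 2) ^ m * P ^ (-(3 : ℝ) / 2)) ^ 2 = P⁻¹ ^ 3 / 4 ^ m := by
    rw [mul_pow, ← Real.rpow_natCast (P ^ _) 2, ← Real.rpow_mul hP.le, ← pow_mul, mul_comm m 2,
      pow_mul]
    norm_num [Real.rpow_neg hP.le, div_eq_mul_inv, one_div_pow, mul_comm]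
  simp only [Lsq_sub, Gfun_sub]
  rw [← Real.sqrt_sq (by positivity : 0 ≤ (1 / 2 : ℝ) ^ m * P ^ (-(3 : ℝ) / 2)),
    hc, ← Real.sqrt_mul (by positivity)]
  exact Real.sqrt_le_sqrt (mul_sum_sq_Lsq_le_setIntegral_marsCube_sq_Gfun _)

/-- Lower-Lipschitz inequality: the `L²([0,1]^m)` distance between
`G_β` and `G_{β'}` is at least `c_m (a₁⋯a_m)^{-3/2}` times the Euclidean distance
between `(L_I)²β` and `(L_I)²β'`. -/
theorem statement19 (m : ℕ) (hm : 1 ≤ m) :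
    ∃ c : ℝ, 0 < c ∧
      ∀ a : Fin m → ℕ, (∀ k, 1 ≤ a k) →
        ∀ β β' : (∀ k, Fin (a k)) → ℝ,
          c * (∏ k, (a k : ℝ)) ^ (-(3 : ℝ) / 2) *
              Real.sqrt (∑ i, (Lsq m a β i - Lsq m a β' i) ^ 2) ≤
            Real.sqrt (∫ x in marsCube m, (Gfun m a β x - Gfun m a β' x) ^ 2) :=
  statement19_general m
end
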